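/- arXiv:1501.03689 — 10 statements merged into one kernel-verified Lean document; each statement's English description precedes it below -/
import Mathlib

section
/- Let F : (Fin d → Fin n) → ℂ be an order-d complex tensor that is partial symmetric with respect to its first m indices, where m < d. For an index j with 1 ≤ j ≤ m, let π_{j,m+1} be the transposition of positions j and m+1, and write F_{π_{j,m+1}}(i) = F(i ∘ π_{j,m+1}). Then the tensor G = F + Σ_{j=1}^{m} F_{π_{j,m+1}} is partial symmetric with respect to its first m+1 indices. -/
/-!
Write `M` for the new position `m`. If `σ` is supported on `insert M s` and `a ∈ insert M s`,
then `σ * swap a M` sends `M` to `σ a`, so it is `swap (σ a) M * τ` with `τ` fixing `M`, hence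
supported on `s`. Symmetry of `F` on `s` absorbs `τ`, so precomposition with `σ` only permutes
the summands `F (i ∘ swap a M)`, `a ∈ insert M s`; the summand `a = M` is `F i`.
-/

open Finset Equiv

section

variable {α β R : Type*}

def IsPartialSymmetric (F : (α → β) → R) (s : Set α) : Prop :=
  ∀ σ : Perm α, (∀ p ∉ s, σ p = p) → ∀ i : α → β, F (i ∘ σ) = F i

lemma IsPartialSymmetric.apply_comp_mul_swap [DecidableEq α] {F : (α → β) → R} {s : Set α} {M : α}
    (hF : IsPartialSymmetric F s) {σ : Perm α} (hσ : ∀ p ∉ insert M s, σ p = p)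
    {a : α} (ha : a ∈ insert M s) (i : α → β) :
    F (i ∘ ⇑(σ * swap a M)) = F (i ∘ ⇑(swap (σ a) M)) := by
  set τ := swap (σ a) M * σ * swap a M
  have hτ : ∀ p ∉ s, τ p = p := by
    intro p hp
    by_cases hpM : p = M
    · simp [τ, hpM]
    have hp' : p ∉ insert M s := by simp [hpM, hp]
    have hpa : p ≠ a := fun h => hp' (h ▸ ha)
    have hσp : σ p = p := hσ p hp'
    have hσa : σ a ≠ p := fun h => hpa (σ.injective (hσp.trans h.symm))
    simp [τ, swap_apply_of_ne_of_ne hpa hpM, hσp, swap_apply_of_ne_of_ne hσa.symm hpM]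
  have hmul : σ * swap a M = swap (σ a) M * τ := by
    simp [τ, ← mul_assoc]
  rw [hmul, Perm.coe_mul, ← Function.comp_assoc, hF τ hτ]

theorem IsPartialSymmetric.sum_comp_swap [DecidableEq α] [AddCommMonoid R]
    {F : (α → β) → R} {s : Finset α} (hF : IsPartialSymmetric F s) (M : α) :
    IsPartialSymmetric (fun i => ∑ a ∈ insert M s, F (i ∘ swap a M)) ↑(insert M s) := by
  intro σ hσ i
  calc ∑ a ∈ insert M s, F ((i ∘ σ) ∘ swap a M)
      = ∑ a ∈ insert M s, F (i ∘ swap (σ a) M) :=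
        sum_congr rfl fun a ha => hF.apply_comp_mul_swap (by simpa using hσ) (by simpa using ha) i
    _ = ∑ a ∈ insert M s, F (i ∘ swap a M) := by
        refine σ.sum_comp _ (fun a => F (i ∘ swap a M)) fun p hp => ?_
        by_contra h
        exact hp (hσ p h)

end

lemma Fin.sum_univ_castLE_eq_sum_Iio {M : Type*} [AddCommMonoid M] {m d : ℕ} (h : m < d)
    (f : Fin d → M) : ∑ j : Fin m, f (Fin.castLE h.le j) = ∑ p ∈ Iio ⟨m, h⟩, f p := by
  have hrange : univ.map (Fin.castLEEmb h.le) = Iio ⟨m, h⟩ := by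
    rw [← coe_inj]
    simp only [coe_map, castLEEmb_apply, coe_univ, Set.image_univ, range_castLE, coe_Iio]
    rfl
  rw [← hrange, sum_map]
  rfl

/-- If `F` is an order-`d` complex tensor that is partial symmetric with respect to its
first `m` indices (`m < d`), then `G = F + ∑_{j=1}^m F_{π_{j,m+1}}` is partial symmetric
with respect to its first `m+1` indices.  (Indices are 0-based here: position `j`,
`0 ≤ j < m`, is 1-based position `j+1`, and 1-based position `m+1` is 0-based `m`.) -/
theorem stmt_0 {d n m : ℕ} (hm : m < d) (F : (Fin d → Fin n) → ℂ)
    (hF : ∀ σ : Equiv.Perm (Fin d), (∀ p : Fin d, m ≤ (p : ℕ) → σ p = p) →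
      ∀ i : Fin d → Fin n, F (i ∘ ⇑σ) = F i) :
    ∀ σ : Equiv.Perm (Fin d), (∀ p : Fin d, m + 1 ≤ (p : ℕ) → σ p = p) →
      ∀ i : Fin d → Fin n,
        (F (i ∘ ⇑σ)
            + ∑ j : Fin m, F ((i ∘ ⇑σ) ∘ ⇑(Equiv.swap (Fin.castLE hm.le j) ⟨m, hm⟩)))
          = F i + ∑ j : Fin m, F (i ∘ ⇑(Equiv.swap (Fin.castLE hm.le j) ⟨m, hm⟩)) := by
  set M : Fin d := ⟨m, hm⟩
  have hG : ∀ i : Fin d → Fin n, F i + ∑ j : Fin m, F (i ∘ swap (Fin.castLE hm.le j) M)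
      = ∑ a ∈ Iic M, F (i ∘ swap a M) := fun i => by
    rw [Fin.sum_univ_castLE_eq_sum_Iio hm fun a => F (i ∘ swap a M), ← Iio_insert,
      sum_insert notMem_Iio_self, swap_self, coe_refl, Function.comp_id]
  have hFs : IsPartialSymmetric F ↑(Iio M) := fun σ hσ =>
    hF σ fun p hp => hσ p (by simpa [Fin.lt_def, M] using hp)
  intro σ hσ i
  have hσ' : ∀ p ∉ (Iic M : Set (Fin d)), σ p = p := fun p hp =>
    hσ p (by simpa [Fin.lt_def, M] using hp)
  rw [hG, hG]
  exact (Iio_insert M ▸ hFs.sum_comp_swap M) σ hσ' i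
end

section
/- Let F : (Fin d → Fin n) → ℂ be an order-d complex tensor that is partial symmetric with respect to its first m indices, where m < d, and let π_{j,m+1} denote the transposition of positions j and m+1. Then for all integers ℓ, k with 1 ≤ ℓ ≤ k ≤ m, the following identity of tensors holds: ( Σ_{j=1}^{k} (F − F_{π_{j,m+1}}) )_{π_{ℓ,m+1}} = −k·(F − F_{π_{ℓ,m+1}}) + Σ_{j=1, j≠ℓ}^{k} (F − F_{π_{j,m+1}}). -/
/-!
For `j ≠ ℓ` in `{1, …, m}` we have `π_{ℓ,m+1} π_{j,m+1} = π_{j,m+1} π_{ℓ,j}`,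
and `π_{ℓ,j}` only moves the first `m` positions, so partial symmetry gives
`(F_{π_{j,m+1}})_{π_{ℓ,m+1}} = F_{π_{j,m+1}}`; for `j = ℓ` the two transpositions cancel.
The identity is then a rearrangement of finite sums.
-/

open Equiv Finset

theorem comp_swap_comp_swap_eq_of_comp_swap_eq {ι α β : Type*} [DecidableEq ι]
    {F : (ι → α) → β} {a b c : ι} (hab : a ≠ b) (hac : a ≠ c)
    (hF : ∀ i, F (i ∘ swap a c) = F i) (i : ι → α) :
    F ((i ∘ swap a b) ∘ swap c b) = F (i ∘ swap c b) := by
  have hconj : swap a b * swap c b = swap c b * swap a c := by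
    have h := swap_mul_swap_mul_swap hab hac
    rw [swap_comm c a] at h
    rw [swap_comm c b, ← h]
    simp only [mul_assoc, swap_mul_self_mul]
  rw [← hF (i ∘ swap c b), Function.comp_assoc, Function.comp_assoc, ← Perm.coe_mul,
    ← Perm.coe_mul, hconj]

theorem sum_sub_eq_neg_card_mul_add_sum_erase {ι R : Type*} [DecidableEq ι] [CommRing R]
    {s : Finset ι} {l : ι} (hl : l ∈ s) (x y : R) (g h : ι → R) (hgl : g l = y)
    (hg : ∀ j ∈ s.erase l, g j = h j) :
    ∑ j ∈ s, (x - g j) = -(#s : R) * (y - x) + ∑ j ∈ s.erase l, (y - h j) := by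
  have hshift : ∑ j ∈ s.erase l, (y - h j)
      = ∑ j ∈ s.erase l, (x - g j) + #(s.erase l) • (y - x) := by
    rw [← sum_const, ← sum_add_distrib]
    refine sum_congr rfl fun j hj => ?_
    rw [hg j hj]; ring
  rw [← add_sum_erase s _ hl, hshift, hgl, ← card_erase_add_one hl, nsmul_eq_mul]
  push_cast
  ring

-- Positions are 0-based: `l` is `ℓ - 1` and position `m` is the paper's `m + 1`.
/-- Identity \eqref{formula:tensor-skewness}: if `F` is partial symmetric with respect to its
first `m` indices (`m < d`) and `1 ≤ ℓ ≤ k ≤ m` (here `l : Fin k` is the 0-based version of `ℓ`),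
then `(∑_{j=1}^k (F - F_{π_{j,m+1}}))_{π_{ℓ,m+1}} = -k (F - F_{π_{ℓ,m+1}}) + ∑_{j≠ℓ} (F - F_{π_{j,m+1}})`. -/
theorem stmt_1 {d n m k : ℕ} (hm : m < d) (hk : k ≤ m)
    (F : (Fin d → Fin n) → ℂ)
    (hF : ∀ σ : Equiv.Perm (Fin d), (∀ p : Fin d, m ≤ (p : ℕ) → σ p = p) →
      ∀ i : Fin d → Fin n, F (i ∘ ⇑σ) = F i)
    (l : Fin k) :
    ∀ i : Fin d → Fin n,
      ∑ j : Fin k,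
          (F (i ∘ ⇑(Equiv.swap (Fin.castLE (hk.trans hm.le) l) ⟨m, hm⟩))
            - F ((i ∘ ⇑(Equiv.swap (Fin.castLE (hk.trans hm.le) l) ⟨m, hm⟩)) ∘
                  ⇑(Equiv.swap (Fin.castLE (hk.trans hm.le) j) ⟨m, hm⟩)))
        = -(k : ℂ) * (F i - F (i ∘ ⇑(Equiv.swap (Fin.castLE (hk.trans hm.le) l) ⟨m, hm⟩)))
          + ∑ j ∈ Finset.univ.erase l,
              (F i - F (i ∘ ⇑(Equiv.swap (Fin.castLE (hk.trans hm.le) j) ⟨m, hm⟩))) := by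
  intro i
  set ι : Fin k → Fin d := Fin.castLE (hk.trans hm.le)
  have hι_lt (j : Fin k) : (ι j : ℕ) < m := j.isLt.trans_le hk
  have hι_ne (j : Fin k) : ι j ≠ ⟨m, hm⟩ := fun h => (hι_lt j).ne (congrArg Fin.val h)
  have hswap (j : Fin k) (i' : Fin d → Fin n) : F (i' ∘ swap (ι l) (ι j)) = F i' :=
    hF _ (fun p hp => swap_apply_of_ne_of_ne (fun h => (hι_lt l).not_ge (h ▸ hp :))
      (fun h => (hι_lt j).not_ge (h ▸ hp :))) i'
  have h := sum_sub_eq_neg_card_mul_add_sum_erase (mem_univ l)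
    (F (i ∘ swap (ι l) ⟨m, hm⟩)) (F i)
    (fun j => F ((i ∘ swap (ι l) ⟨m, hm⟩) ∘ swap (ι j) ⟨m, hm⟩))
    (fun j => F (i ∘ swap (ι j) ⟨m, hm⟩))
    (by simp only [Function.comp_assoc, ← Perm.coe_mul, swap_mul_self, Perm.coe_one,
      Function.comp_id])
    (fun j hj => comp_swap_comp_swap_eq_of_comp_swap_eq (hι_ne l)
      (fun h => ne_of_mem_erase hj (Fin.castLE_injective _ h).symm) (hswap j) i)
  rwa [card_univ, Fintype.card_fin] at h
end

section
/- Let F : (Fin (2*d) → Fin n) → ℂ be a super-symmetric order-2d complex tensor, and suppose F = Σ_{i=1}^{r} B^i ⊗ B^i where each B^i : (Fin d → Fin n) → ℂ is partial symmetric with respect to its first m indices, with m < d. Then there exist order-d tensors A^i : (Fin d → Fin n) → ℂ, each partial symmetric with respect to its first m+1 indices, such that F = Σ_{i=1}^{r} A^i ⊗ A^i. -/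
/-!
Averaging each `Bⁱ` over all permutations of its indices yields fully symmetric tensors `Aⁱ`.
Super-symmetry of `F` lets one permute the two halves of an index independently, so
`F(u ⊕ v) = ∑ᵢ Bⁱ(u ∘ σ) Bⁱ(v ∘ τ)` for all permutations `σ, τ`; averaging this identity over
`σ` and `τ` gives `F = ∑ᵢ Aⁱ ⊗ Aⁱ`.
-/

open Finset

section Symmetrize

variable {ι α 𝕜 : Type*} [Fintype ι] [DecidableEq ι] [Field 𝕜]

noncomputable def symmetrize (f : (ι → α) → 𝕜) (u : ι → α) : 𝕜 :=
  (Fintype.card (Equiv.Perm ι) : 𝕜)⁻¹ * ∑ σ : Equiv.Perm ι, f (u ∘ σ)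

theorem symmetrize_comp_perm (f : (ι → α) → 𝕜) (τ : Equiv.Perm ι) (u : ι → α) :
    symmetrize f (u ∘ τ) = symmetrize f u := by
  unfold symmetrize
  congr 1
  exact Fintype.sum_equiv (Equiv.mulLeft τ) _ _ fun σ => rfl

theorem sum_symmetrize_mul_symmetrize [CharZero 𝕜] {κ : Type*} [Fintype κ]
    (B : κ → (ι → α) → 𝕜) (u v : ι → α) (c : 𝕜)
    (h : ∀ σ τ : Equiv.Perm ι, ∑ i, B i (u ∘ σ) * B i (v ∘ τ) = c) :
    ∑ i, symmetrize (B i) u * symmetrize (B i) v = c := by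
  set N : 𝕜 := (Fintype.card (Equiv.Perm ι) : 𝕜)
  have hN : N ≠ 0 := Nat.cast_ne_zero.mpr Fintype.card_ne_zero
  calc ∑ i, symmetrize (B i) u * symmetrize (B i) v
      = N⁻¹ * N⁻¹ * ∑ σ : Equiv.Perm ι, ∑ τ : Equiv.Perm ι, ∑ i, B i (u ∘ σ) * B i (v ∘ τ) := by
        have hprod : ∀ i, symmetrize (B i) u * symmetrize (B i) v =
            N⁻¹ * N⁻¹ * ∑ σ : Equiv.Perm ι, ∑ τ : Equiv.Perm ι, B i (u ∘ σ) * B i (v ∘ τ) := by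
          intro i
          rw [symmetrize, symmetrize, ← sum_mul_sum]
          ring
        rw [sum_congr rfl fun i _ => hprod i, ← mul_sum, sum_comm]
        exact congrArg _ (sum_congr rfl fun σ _ => sum_comm)
    _ = N⁻¹ * N⁻¹ * (N * (N * c)) := by simp [h, N]
    _ = c := by field_simp

end Symmetrize

section SplitIndex

variable {a b : ℕ} {α : Type*}

def Equiv.Perm.finAppend (σ : Equiv.Perm (Fin a)) (τ : Equiv.Perm (Fin b)) :
    Equiv.Perm (Fin (a + b)) :=
  finSumFinEquiv.permCongr (σ.sumCongr τ)

theorem Equiv.Perm.finAppend_castAdd (σ : Equiv.Perm (Fin a)) (τ : Equiv.Perm (Fin b))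
    (p : Fin a) : σ.finAppend τ (Fin.castAdd b p) = Fin.castAdd b (σ p) := by
  simp [Equiv.Perm.finAppend, Equiv.permCongr_apply]

theorem Equiv.Perm.finAppend_natAdd (σ : Equiv.Perm (Fin a)) (τ : Equiv.Perm (Fin b))
    (p : Fin b) : σ.finAppend τ (Fin.natAdd a p) = Fin.natAdd a (τ p) := by
  simp [Equiv.Perm.finAppend, Equiv.permCongr_apply]

theorem sum_mul_comp_perm_eq_of_symmetric {𝕜 κ : Type*} [CommSemiring 𝕜] [Fintype κ]
    {F : (Fin (a + b) → α) → 𝕜}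
    (hsym : ∀ ρ : Equiv.Perm (Fin (a + b)), ∀ w : Fin (a + b) → α, F (w ∘ ρ) = F w)
    {B : κ → (Fin a → α) → 𝕜} {C : κ → (Fin b → α) → 𝕜}
    (hdecomp : ∀ w : Fin (a + b) → α,
      F w = ∑ i, B i (fun p => w (Fin.castAdd b p)) * C i (fun p => w (Fin.natAdd a p)))
    (w : Fin (a + b) → α) (σ : Equiv.Perm (Fin a)) (τ : Equiv.Perm (Fin b)) :
    ∑ i, B i ((fun p => w (Fin.castAdd b p)) ∘ σ) * C i ((fun p => w (Fin.natAdd a p)) ∘ τ) =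
      F w := by
  rw [← hsym (σ.finAppend τ) w, hdecomp]
  simp only [Function.comp_apply, Equiv.Perm.finAppend_castAdd, Equiv.Perm.finAppend_natAdd]
  rfl

end SplitIndex

theorem stmt_3_general {d n m r : ℕ}
    (F : (Fin (d + d) → Fin n) → ℂ)
    (hsym : ∀ σ : Equiv.Perm (Fin (d + d)), ∀ w : Fin (d + d) → Fin n, F (w ∘ ⇑σ) = F w)
    (B : Fin r → (Fin d → Fin n) → ℂ)
    (hdecomp : ∀ w : Fin (d + d) → Fin n,
      F w = ∑ i, B i (fun p => w (Fin.castAdd d p)) * B i (fun p => w (Fin.natAdd d p))) :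
    ∃ A : Fin r → (Fin d → Fin n) → ℂ,
      (∀ i, ∀ σ : Equiv.Perm (Fin d), (∀ p : Fin d, m + 1 ≤ (p : ℕ) → σ p = p) →
        ∀ u : Fin d → Fin n, A i (u ∘ ⇑σ) = A i u) ∧
      (∀ w : Fin (d + d) → Fin n,
        F w = ∑ i, A i (fun p => w (Fin.castAdd d p)) * A i (fun p => w (Fin.natAdd d p))) := by
  refine ⟨fun i => symmetrize (B i), fun i σ _ u => symmetrize_comp_perm (B i) σ u, fun w => ?_⟩
  exact (sum_symmetrize_mul_symmetrize B _ _ (F w)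
    (sum_mul_comp_perm_eq_of_symmetric hsym hdecomp w)).symm

/-- Lemma: if a super-symmetric order-`2d` tensor `F` decomposes as `∑ Bⁱ ⊗ Bⁱ` with each
`Bⁱ` partial symmetric with respect to its first `m` indices (`m < d`), then `F` also
decomposes as `∑ Aⁱ ⊗ Aⁱ` (same number of terms) with each `Aⁱ` partial symmetric with
respect to its first `m + 1` indices. -/
theorem stmt_3 {d n m r : ℕ} (hm : m < d)
    (F : (Fin (d + d) → Fin n) → ℂ)
    (hsym : ∀ σ : Equiv.Perm (Fin (d + d)), ∀ w : Fin (d + d) → Fin n, F (w ∘ ⇑σ) = F w)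
    (B : Fin r → (Fin d → Fin n) → ℂ)
    (hB : ∀ i, ∀ σ : Equiv.Perm (Fin d), (∀ p : Fin d, m ≤ (p : ℕ) → σ p = p) →
      ∀ u : Fin d → Fin n, B i (u ∘ ⇑σ) = B i u)
    (hdecomp : ∀ w : Fin (d + d) → Fin n,
      F w = ∑ i, B i (fun p => w (Fin.castAdd d p)) * B i (fun p => w (Fin.natAdd d p))) :
    ∃ A : Fin r → (Fin d → Fin n) → ℂ,
      (∀ i, ∀ σ : Equiv.Perm (Fin d), (∀ p : Fin d, m + 1 ≤ (p : ℕ) → σ p = p) →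
        ∀ u : Fin d → Fin n, A i (u ∘ ⇑σ) = A i u) ∧
      (∀ w : Fin (d + d) → Fin n,
        F w = ∑ i, A i (fun p => w (Fin.castAdd d p)) * A i (fun p => w (Fin.natAdd d p))) :=
  stmt_3_general F hsym B hdecomp
end

section
/- Let F : (Fin (2*d) → Fin n) → ℂ be a super-symmetric order-2d complex tensor, and suppose F = Σ_{i=1}^{r} B^i ⊗ B^i for some order-d tensors B^i : (Fin d → Fin n) → ℂ. Then there exist super-symmetric order-d tensors A^i : (Fin d → Fin n) → ℂ (i.e., A^i(u ∘ σ) = A^i(u) for every permutation σ of Fin d) such that F = Σ_{i=1}^{r} A^i ⊗ A^i. In particular, the symmetric M-rank and the strongly symmetric M-rank of a super-symmetric even-order tensor coincide: the smallest r admitting a decomposition F = Σ_{i=1}^{r} B^i ⊗ B^i equals the smallest r admitting such a decomposition with all factors super-symmetric. -/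
theorem my_aux {d n : ℕ}
    (F : (Fin (d + d) → Fin n) → ℂ)
    (hsym : ∀ σ : Equiv.Perm (Fin (d + d)), ∀ w : Fin (d + d) → Fin n, F (w ∘ ⇑σ) = F w)
    {r : ℕ} (B : Fin r → (Fin d → Fin n) → ℂ)
    (hdecomp : ∀ w : Fin (d + d) → Fin n,
      F w = ∑ i, B i (fun p => w (Fin.castAdd d p)) * B i (fun p => w (Fin.natAdd d p))) :
    ∃ A : Fin r → (Fin d → Fin n) → ℂ,
      (∀ i, ∀ σ : Equiv.Perm (Fin d), ∀ u : Fin d → Fin n, A i (u ∘ ⇑σ) = A i u) ∧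
      (∀ w : Fin (d + d) → Fin n,
        F w = ∑ i, A i (fun p => w (Fin.castAdd d p)) * A i (fun p => w (Fin.natAdd d p))) := by
  set c : ℂ := (Nat.factorial d : ℂ) with hc
  have hc0 : c ≠ 0 := by
    simp [hc, Nat.factorial_ne_zero]
  refine ⟨fun i u => c⁻¹ * ∑ σ : Equiv.Perm (Fin d), B i (u ∘ ⇑σ), ?_, ?_⟩
  · intro i σ u
    show c⁻¹ * ∑ τ : Equiv.Perm (Fin d), B i ((u ∘ ⇑σ) ∘ ⇑τ)
        = c⁻¹ * ∑ τ : Equiv.Perm (Fin d), B i (u ∘ ⇑τ)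
    have h : ∑ τ : Equiv.Perm (Fin d), B i ((u ∘ ⇑σ) ∘ ⇑τ)
        = ∑ τ : Equiv.Perm (Fin d), B i (u ∘ ⇑τ) :=
      Fintype.sum_bijective (fun τ => σ * τ) (Group.mulLeft_bijective σ) _ _ (fun τ => rfl)
    rw [h]
  · have key : ∀ (σ τ : Equiv.Perm (Fin d)) (w : Fin (d + d) → Fin n),
        F w = ∑ i, B i ((fun p => w (Fin.castAdd d p)) ∘ ⇑σ)
                * B i ((fun p => w (Fin.natAdd d p)) ∘ ⇑τ) := by
      intro σ τ w
      set ρ : Equiv.Perm (Fin (d + d)) :=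
        (finSumFinEquiv.symm.trans ((Equiv.sumCongr σ τ).trans finSumFinEquiv)) with hρ
      have h1 := hsym ρ w
      have h2 := hdecomp (w ∘ ⇑ρ)
      rw [h1] at h2
      have e1 : (fun p => (w ∘ ⇑ρ) (Fin.castAdd d p))
          = (fun p => w (Fin.castAdd d p)) ∘ ⇑σ := by
        funext p; simp [hρ, Function.comp]
      have e2 : (fun p => (w ∘ ⇑ρ) (Fin.natAdd d p))
          = (fun p => w (Fin.natAdd d p)) ∘ ⇑τ := by
        funext p
        show w (ρ (Fin.natAdd d p)) = w (Fin.natAdd d (τ p))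
        congr 1
        rw [hρ]
        rw [Equiv.trans_apply, Equiv.trans_apply, finSumFinEquiv_symm_apply_natAdd,
          Equiv.sumCongr_apply, Sum.map_inr, finSumFinEquiv_apply_right]
      rw [h2]
      exact Finset.sum_congr rfl fun i _ => by rw [e1, e2]
    intro w
    calc F w = c⁻¹ * c⁻¹ * (c * c * F w) := by field_simp
    _ = c⁻¹ * c⁻¹ * ∑ σ : Equiv.Perm (Fin d), ∑ τ : Equiv.Perm (Fin d),
          ∑ i, B i ((fun p => w (Fin.castAdd d p)) ∘ ⇑σ)
            * B i ((fun p => w (Fin.natAdd d p)) ∘ ⇑τ) := by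
        congr 1
        rw [Finset.sum_congr rfl (fun σ _ => (Finset.sum_congr rfl
          (fun τ _ => (key σ τ w).symm)))]
        simp [Finset.sum_const, Fintype.card_perm, nsmul_eq_mul, hc]
        ring
    _ = c⁻¹ * c⁻¹ * ∑ i, (∑ σ : Equiv.Perm (Fin d), B i ((fun p => w (Fin.castAdd d p)) ∘ ⇑σ))
          * (∑ τ : Equiv.Perm (Fin d), B i ((fun p => w (Fin.natAdd d p)) ∘ ⇑τ)) := by
        congr 1
        rw [Finset.sum_congr rfl fun σ _ => Finset.sum_comm, Finset.sum_comm]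
        exact Finset.sum_congr rfl fun i _ => (Finset.sum_mul_sum _ _ _ _).symm
    _ = ∑ i, (c⁻¹ * ∑ σ : Equiv.Perm (Fin d), B i ((fun p => w (Fin.castAdd d p)) ∘ ⇑σ))
          * (c⁻¹ * ∑ τ : Equiv.Perm (Fin d), B i ((fun p => w (Fin.natAdd d p)) ∘ ⇑τ)) := by
        rw [Finset.mul_sum]
        exact Finset.sum_congr rfl fun i _ => by ring
    _ = _ := rfl
/-- If a super-symmetric order-`2d` tensor `F` decomposes as `∑_{i=1}^r Bⁱ ⊗ Bⁱ`, then it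
also decomposes as `∑_{i=1}^r Aⁱ ⊗ Aⁱ` with all `Aⁱ` super-symmetric.  In particular, the
symmetric M-rank and the strongly symmetric M-rank coincide: the smallest `r` admitting a
decomposition `F = ∑ Bⁱ ⊗ Bⁱ` equals the smallest `r` admitting such a decomposition with
all factors super-symmetric. -/
theorem stmt_4 {d n r : ℕ}
    (F : (Fin (d + d) → Fin n) → ℂ)
    (hsym : ∀ σ : Equiv.Perm (Fin (d + d)), ∀ w : Fin (d + d) → Fin n, F (w ∘ ⇑σ) = F w)
    (B : Fin r → (Fin d → Fin n) → ℂ)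
    (hdecomp : ∀ w : Fin (d + d) → Fin n,
      F w = ∑ i, B i (fun p => w (Fin.castAdd d p)) * B i (fun p => w (Fin.natAdd d p))) :
    (∃ A : Fin r → (Fin d → Fin n) → ℂ,
      (∀ i, ∀ σ : Equiv.Perm (Fin d), ∀ u : Fin d → Fin n, A i (u ∘ ⇑σ) = A i u) ∧
      (∀ w : Fin (d + d) → Fin n,
        F w = ∑ i, A i (fun p => w (Fin.castAdd d p)) * A i (fun p => w (Fin.natAdd d p)))) ∧
    sInf {s : ℕ | ∃ C : Fin s → (Fin d → Fin n) → ℂ,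
        ∀ w : Fin (d + d) → Fin n,
          F w = ∑ i, C i (fun p => w (Fin.castAdd d p)) * C i (fun p => w (Fin.natAdd d p))}
      = sInf {s : ℕ | ∃ C : Fin s → (Fin d → Fin n) → ℂ,
          (∀ i, ∀ σ : Equiv.Perm (Fin d), ∀ u : Fin d → Fin n, C i (u ∘ ⇑σ) = C i u) ∧
          ∀ w : Fin (d + d) → Fin n,
            F w = ∑ i, C i (fun p => w (Fin.castAdd d p)) * C i (fun p => w (Fin.natAdd d p))} := by
  refine ⟨my_aux F hsym B hdecomp, ?_⟩
  congr 1
  ext s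
  constructor
  · rintro ⟨C, hC⟩
    obtain ⟨A, h1, h2⟩ := my_aux F hsym C hC
    exact ⟨A, h1, h2⟩
  · rintro ⟨C, -, hC⟩
    exact ⟨C, hC⟩
end

section
/- Let F : (Fin (2*d) → Fin n) → ℂ be a super-symmetric order-2d complex tensor and let matr(F) denote its square unfolding. Then rank(matr(F)) ≤ 1 if and only if there exists a vector b ∈ ℂ^n such that F(i) = Π_{k=1}^{2d} b(i_k) for all index tuples i. Equivalently, for super-symmetric even-order tensors the M-rank equals 1 if and only if the symmetric CP-rank equals 1. -/
/-!
A symmetric matrix of rank at most one over `ℂ` is `g gᵀ`, so once the unfolding has rank at most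
one, `F (u ⊕ v) = g u * g v`. Transposing a position of `u` with a position of `v` fixes `F`, so
`g u * g v` is unchanged when an entry of `u` is exchanged with an entry of `v`. If `g ≠ 0`, such
exchanges of a tuple with itself spread one of its entries `a` over all positions without making
`g` vanish, so `g c ≠ 0` for the constant tuple `c = (a, …, a)`. Exchanging the entries of `u`
one at a time with those of `c` then gives `g u * g c ^ d = g c * ∏ₖ g (c with u k in slot k)`,
and the factors do not depend on the slot, so `g` is a scalar times `∏ₖ γ (u k)`. A `2d`-th root
of the square of that scalar absorbs it into `b`.
-/

open Function Finset

theorem Fin.append_comp_swap_castAdd_natAdd {m n : ℕ} {α : Type*} (u : Fin m → α)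
    (v : Fin n → α) (i : Fin m) (j : Fin n) :
    Fin.append u v ∘ Equiv.swap (Fin.castAdd n i) (Fin.natAdd m j) =
      Fin.append (update u i (v j)) (update v j (u i)) := by
  ext x
  refine Fin.addCases (fun k => ?_) (fun k => ?_) x <;>
    simp only [comp_apply, Equiv.swap_apply_def, Fin.ext_iff, Fin.val_castAdd, Fin.val_natAdd,
      Nat.add_left_cancel_iff, Fin.append_left, Fin.append_right, update_apply] <;>
    split_ifs <;> simp_all <;> omega

theorem Fin.append_comp_finAddFlip {n : ℕ} {α : Type*} (u v : Fin n → α) :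
    Fin.append u v ∘ finAddFlip = Fin.append v u := by
  ext x
  refine Fin.addCases (fun k => ?_) (fun k => ?_) x <;>
    simp only [comp_apply, finAddFlip_apply_castAdd, finAddFlip_apply_natAdd, Fin.append_left,
      Fin.append_right]

theorem Fin.prod_append {m n : ℕ} {α M : Type*} [CommMonoid M] (b : α → M) (u : Fin m → α)
    (v : Fin n → α) : ∏ k, b (Fin.append u v k) = (∏ k, b (u k)) * ∏ k, b (v k) := by
  simp [Fin.prod_univ_add]

theorem Matrix.exists_eq_vecMulVec_of_rank_le_one {m n K : Type*} [Fintype m] [Fintype n]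
    [Field K] {A : Matrix m n K} (h : A.rank ≤ 1) : ∃ w v, A = Matrix.vecMulVec w v := by
  rw [Matrix.rank_eq_finrank_span_cols, finrank_le_one_iff] at h
  obtain ⟨⟨w, _⟩, hw⟩ := h
  choose c hc using fun j => hw ⟨A.col j, Submodule.subset_span ⟨j, rfl⟩⟩
  refine ⟨w, c, Matrix.ext fun i j => ?_⟩
  have hcol := congrFun (congrArg Subtype.val (hc j)) i
  simp only [SetLike.val_smul, Pi.smul_apply, smul_eq_mul, Matrix.col_apply] at hcol
  simp [Matrix.vecMulVec_apply, ← hcol, mul_comm]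

theorem Matrix.IsSymm.exists_eq_vecMulVec_self_of_rank_le_one {m K : Type*} [Fintype m]
    [Field K] [IsAlgClosed K] {A : Matrix m m K} (hA : A.IsSymm) (h : A.rank ≤ 1) :
    ∃ g, A = Matrix.vecMulVec g g := by
  obtain ⟨w, v, rfl⟩ := Matrix.exists_eq_vecMulVec_of_rank_le_one h
  by_cases hw : w = 0
  · exact ⟨0, by simp [hw]⟩
  obtain ⟨i, hi⟩ : ∃ i, w i ≠ 0 := Function.ne_iff.mp hw
  obtain ⟨s, hs⟩ := IsAlgClosed.exists_pow_nat_eq (v i / w i) two_pos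
  refine ⟨s • w, Matrix.ext fun k l => ?_⟩
  have hsymm := congrFun (congrFun hA i) l
  simp only [Matrix.transpose_apply, Matrix.vecMulVec_apply] at hsymm
  simp only [Matrix.vecMulVec_apply, Pi.smul_apply, smul_eq_mul]
  rw [mul_mul_mul_comm, ← sq, hs]
  field_simp
  linear_combination -w k * hsymm

section

variable {ι α K : Type*} [DecidableEq ι]

def MulExchangeInvariant [Mul K] (g : (ι → α) → K) : Prop :=
  ∀ u v i j, g u * g v = g (update u i (v j)) * g (update v j (u i))

namespace MulExchangeInvariant

theorem apply_const_ne_zero [Fintype ι] [MulZeroClass K] [NoZeroDivisors K]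
    {g : (ι → α) → K} (hg : MulExchangeInvariant g) {u : ι → α} (hu : g u ≠ 0) (j : ι) :
    g (fun _ => u j) ≠ 0 := by
  suffices ∀ S : Finset ι, g (S.piecewise (fun _ => u j) u) ≠ 0 by
    simpa using this univ
  intro S
  induction S using Finset.induction_on with
  | empty => simpa using hu
  | insert k S _ ih =>
    set w := S.piecewise (fun _ => u j) u
    have hwj : w j = u j := by by_cases hj : j ∈ S <;> simp [w, hj]
    have hexch := hg w w k j
    rw [hwj] at hexch
    rw [piecewise_insert]
    exact left_ne_zero_of_mul (hexch ▸ mul_ne_zero ih ih)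

theorem apply_update_const_eq [CommMonoidWithZero K] [IsCancelMulZero K] {g : (ι → α) → K}
    (hg : MulExchangeInvariant g) {a : α} (ha : g (fun _ => a) ≠ 0) (i j : ι) (x : α) :
    g (update (fun _ => a) i x) = g (update (fun _ => a) j x) := by
  have hexch := hg (fun _ => a) (update (fun _ => a) i x) j i
  rw [update_self, update_idem, update_eq_self_iff.mpr rfl] at hexch
  exact mul_left_cancel₀ ha (hexch.trans (mul_comm _ _))

theorem mul_pow_card_eq [CommMonoid K] {g : (ι → α) → K} (hg : MulExchangeInvariant g) (a : α)
    (u : ι → α) (S : Finset ι) :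
    g u * g (fun _ => a) ^ #S =
      g (S.piecewise (fun _ => a) u) * ∏ k ∈ S, g (update (fun _ => a) k (u k)) := by
  induction S using Finset.induction_on with
  | empty => simp
  | insert k S hk ih =>
    have hexch := hg (S.piecewise (fun _ => a) u) (fun _ => a) k k
    rw [piecewise_eq_of_notMem _ _ _ hk] at hexch
    rw [card_insert_of_notMem hk, pow_succ, ← mul_assoc, ih, prod_insert hk, mul_right_comm,
      hexch, piecewise_insert, mul_assoc]

theorem exists_eq_mul_prod [Fintype ι] [Nonempty ι] [Field K] {g : (ι → α) → K}
    (hg : MulExchangeInvariant g) : ∃ (D : K) (γ : α → K), ∀ u, g u = D * ∏ k, γ (u k) := by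
  by_cases hzero : ∀ u, g u = 0
  · exact ⟨0, 0, fun u => by simp [hzero]⟩
  push Not at hzero
  obtain ⟨u₀, hu₀⟩ := hzero
  obtain ⟨j⟩ := ‹Nonempty ι›
  have hD := hg.apply_const_ne_zero hu₀ j
  refine ⟨g (fun _ => u₀ j), fun x => g (update (fun _ => u₀ j) j x) / g (fun _ => u₀ j),
    fun u => mul_right_cancel₀ (pow_ne_zero #(univ : Finset ι) hD) ?_⟩
  rw [hg.mul_pow_card_eq, piecewise_univ, prod_div_distrib, prod_const,
    prod_congr rfl fun k _ => hg.apply_update_const_eq hD k j (u k)]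
  field_simp

end MulExchangeInvariant

end

/-- For a super-symmetric order-`2d` tensor `F`, the square unfolding `matr(F)` has rank at
most `1` if and only if `F(i) = ∏_k b(i_k)` for some vector `b`; i.e., for super-symmetric
even-order tensors the M-rank equals one iff the symmetric CP-rank equals one. -/
theorem stmt_6 {d n : ℕ} (hd : 0 < d)
    (F : (Fin (d + d) → Fin n) → ℂ)
    (hsym : ∀ σ : Equiv.Perm (Fin (d + d)), ∀ w : Fin (d + d) → Fin n, F (w ∘ ⇑σ) = F w) :
    (Matrix.of fun u v : Fin d → Fin n => F (Fin.append u v)).rank ≤ 1 ↔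
      ∃ b : Fin n → ℂ, ∀ w : Fin (d + d) → Fin n, F w = ∏ k, b (w k) := by
  constructor
  · intro hrank
    have hsymm : (Matrix.of fun u v : Fin d → Fin n => F (Fin.append u v)).IsSymm :=
      Matrix.ext fun u v => by simp [← Fin.append_comp_finAddFlip u v, hsym]
    obtain ⟨g, hg⟩ := hsymm.exists_eq_vecMulVec_self_of_rank_le_one hrank
    have hF : ∀ u v, F (Fin.append u v) = g u * g v := fun u v => congrFun (congrFun hg u) v
    have hexch : MulExchangeInvariant g := fun u v i j => by
      rw [← hF, ← hF, ← Fin.append_comp_swap_castAdd_natAdd, hsym]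
    have : Nonempty (Fin d) := ⟨⟨0, hd⟩⟩
    obtain ⟨D, γ, hγ⟩ := hexch.exists_eq_mul_prod
    obtain ⟨r, hr⟩ := IsAlgClosed.exists_pow_nat_eq (D ^ 2) (by omega : 0 < d + d)
    refine ⟨r • γ, fun w => ?_⟩
    rw [← Fin.append_castAdd_natAdd (f := w), hF, hγ, hγ, Fin.prod_append]
    simp only [Pi.smul_apply, smul_eq_mul, prod_mul_distrib, prod_const, card_univ,
      Fintype.card_fin]
    rw [mul_mul_mul_comm (r ^ d), ← pow_add, hr]
    ring
  · rintro ⟨b, hb⟩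
    have hF : (Matrix.of fun u v : Fin d → Fin n => F (Fin.append u v)) =
        Matrix.vecMulVec (fun u => ∏ k, b (u k)) (fun u => ∏ k, b (u k)) :=
      Matrix.ext fun u v => by simp [hb, Fin.prod_append, Matrix.vecMulVec_apply]
    exact hF ▸ Matrix.rank_vecMulVec_le _ _
end

section
/- Let F : Fin n₁ × Fin n₂ × Fin n₃ × Fin n₄ → ℂ be a fourth-order complex tensor, let (j₁,j₂,j₃,j₄) be a permutation of (1,2,3,4), and suppose the square unfolding matrix M with M((i_{j₁},i_{j₂}),(i_{j₃},i_{j₄})) = F(i₁,i₂,i₃,i₄) has rank r. Then F admits a CP decomposition with at most min(n_{j₁}, n_{j₂}) · min(n_{j₃}, n_{j₄}) · r terms. In particular, if n₁ ≤ n₂ ≤ n₃ ≤ n₄ then the CP-rank of F is at most n₁·n₃·r. -/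
/-!
If the unfolding has rank `r`, then `F i = ∑ₜ Cₜ(i_{σ0}, i_{σ1}) · Dₜ(i_{σ2}, i_{σ3})` with `r`
terms. Each matrix `Cₜ`, `Dₜ` is the sum of `min` of its two dimensions rank-one matrices
(one per row, or one per column), and multiplying these expansions out gives a CP decomposition.
For sorted dimensions, one of the two pairs of modes contains the first mode and both pairs
contain a mode other than the last, whence `min · min ≤ n₁ · n₃`.
-/

open Finset

section CPDecomposition

variable {K : Type*} [CommSemiring K] {ι : Type*} [Fintype ι] {X : ι → Type*}

def HasCPDecomposition (F : (∀ k, X k) → K) (T : Type*) [Fintype T] : Prop :=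
  ∃ a : (k : ι) → T → X k → K, ∀ i, F i = ∑ p, ∏ k, a k p (i k)

theorem HasCPDecomposition.of_equiv {F : (∀ k, X k) → K} {T T' : Type*} [Fintype T]
    [Fintype T'] (h : HasCPDecomposition F T) (e : T' ≃ T) : HasCPDecomposition F T' := by
  obtain ⟨a, ha⟩ := h
  exact ⟨fun k p => a k (e p), fun i => by rw [ha, ← e.sum_comp]⟩

theorem HasCPDecomposition.reindex_modes {ι' : Type*} [Fintype ι'] (e : ι' ≃ ι) {T : Type*}
    [Fintype T] {G : (∀ j, X (e j)) → K} (h : HasCPDecomposition G T) :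
    HasCPDecomposition (fun i : ∀ k, X k => G fun j => i (e j)) T := by
  obtain ⟨b, hb⟩ := h
  refine ⟨Equiv.piCongrLeft (fun k => T → X k → K) e b, fun i => ?_⟩
  show G _ = _
  rw [hb]
  refine sum_congr rfl fun p _ => ?_
  rw [← e.prod_comp]
  simp only [Equiv.piCongrLeft_apply_apply]

end CPDecomposition

theorem Matrix.exists_rank_factorization {K I J : Type*} [Field K] [Fintype I] [Fintype J]
    (M : Matrix I J K) :
    ∃ (C : I → Fin M.rank → K) (D : Fin M.rank → J → K),
      ∀ x y, M x y = ∑ t, C x t * D t y := by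
  let W := Submodule.span K (Set.range M.col)
  let b : Module.Basis (Fin M.rank) K W :=
    Module.finBasisOfFinrankEq K W M.rank_eq_finrank_span_cols.symm
  have hcol : ∀ y, M.col y ∈ W := fun y => Submodule.subset_span ⟨y, rfl⟩
  refine ⟨fun x t => (b t : I → K) x, fun t y => b.repr ⟨M.col y, hcol y⟩ t,
    fun x y => ?_⟩
  have := congr_fun (congr_arg Subtype.val (b.sum_repr ⟨M.col y, hcol y⟩)) x
  simp only [AddSubmonoidClass.coe_finsetSum, SetLike.val_smul, Finset.sum_apply,
    Pi.smul_apply, smul_eq_mul] at this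
  rw [← M.col_apply, ← this]
  simp only [mul_comm]

theorem exists_sum_mul_of_equiv {K I J T : Type*} [CommSemiring K] [Fintype T] [DecidableEq I]
    (e : T ≃ I) (U : I → J → K) :
    ∃ (a : T → I → K) (b : T → J → K), ∀ x y, U x y = ∑ s, a s x * b s y :=
  ⟨fun s => Pi.single (e s) 1, fun s => U (e s), fun x y => by
    rw [Fintype.sum_eq_single (e.symm x) fun s hs => by
      simp [Pi.single_eq_of_ne (show x ≠ e s by rintro rfl; simp at hs)]]
    simp⟩

theorem exists_sum_mul_fin_min {K : Type*} [CommSemiring K] {p q : ℕ}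
    (U : Fin p → Fin q → K) :
    ∃ (a : Fin (min p q) → Fin p → K) (b : Fin (min p q) → Fin q → K),
      ∀ x y, U x y = ∑ s, a s x * b s y := by
  rcases le_total p q with h | h
  · exact exists_sum_mul_of_equiv (finCongr (min_eq_left h)) U
  · obtain ⟨b, a, hba⟩ :=
      exists_sum_mul_of_equiv (finCongr (min_eq_right h)) (fun y x => U x y)
    exact ⟨a, b, fun x y => by simp only [hba y x, mul_comm]⟩

theorem hasCPDecomposition_of_unfolding {K : Type*} [Field K] {m : Fin 4 → ℕ}
    (G : (∀ j, Fin (m j)) → K) (M : Matrix (Fin (m 0) × Fin (m 1)) (Fin (m 2) × Fin (m 3)) K)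
    (hM : ∀ i, M (i 0, i 1) (i 2, i 3) = G i) :
    HasCPDecomposition G (Fin M.rank × Fin (min (m 0) (m 1)) × Fin (min (m 2) (m 3))) := by
  obtain ⟨C, D, hCD⟩ := M.exists_rank_factorization
  choose A B hAB using fun t => exists_sum_mul_fin_min fun x y => C (x, y) t
  choose P Q hPQ using fun t => exists_sum_mul_fin_min fun z w => D t (z, w)
  refine ⟨fun k => match k with
    | 0 => fun p => A p.1 p.2.1
    | 1 => fun p => B p.1 p.2.1
    | 2 => fun p => P p.1 p.2.2
    | 3 => fun p => Q p.1 p.2.2, fun i => ?_⟩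
  rw [← hM, hCD, Fintype.sum_prod_type]
  refine sum_congr rfl fun t _ => ?_
  rw [hAB, hPQ, sum_mul_sum, Fintype.sum_prod_type]
  refine sum_congr rfl fun s _ => sum_congr rfl fun s' _ => ?_
  rw [Fin.prod_univ_four]
  ring

theorem min_mul_min_le_of_monotone {n : Fin 4 → ℕ} (hn : Monotone n) (σ : Equiv.Perm (Fin 4)) :
    min (n (σ 0)) (n (σ 1)) * min (n (σ 2)) (n (σ 3)) ≤ n 0 * n 2 := by
  have hpair : ∀ u v : Fin 4, u ≠ v → min (n u) (n v) ≤ n 2 := by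
    intro u v huv
    rcases (show u ≤ 2 ∨ v ≤ 2 by omega) with hu | hv
    · exact (min_le_left _ _).trans (hn hu)
    · exact (min_le_right _ _).trans (hn hv)
  have hσ : ∀ {j j' : Fin 4}, j ≠ j' → σ j ≠ σ j' := fun h => σ.injective.ne h
  obtain ⟨j, hj⟩ := σ.surjective 0
  replace hj := congr_arg n hj
  fin_cases j
  · exact Nat.mul_le_mul ((min_le_left _ _).trans_eq hj) (hpair _ _ (hσ (by decide)))
  · exact Nat.mul_le_mul ((min_le_right _ _).trans_eq hj) (hpair _ _ (hσ (by decide)))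
  · rw [mul_comm (n 0)]
    exact Nat.mul_le_mul (hpair _ _ (hσ (by decide))) ((min_le_left _ _).trans_eq hj)
  · rw [mul_comm (n 0)]
    exact Nat.mul_le_mul (hpair _ _ (hσ (by decide))) ((min_le_right _ _).trans_eq hj)

/-- If some square unfolding of a fourth-order tensor `F` (grouping modes `(σ 0, σ 1)`
against `(σ 2, σ 3)`) has rank `r`, then `F` admits a CP decomposition with at most
`min(n_{σ0}, n_{σ1}) · min(n_{σ2}, n_{σ3}) · r` terms.  In particular, if
`n₁ ≤ n₂ ≤ n₃ ≤ n₄` then the CP-rank of `F` is at most `n₁ · n₃ · r`. -/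
theorem stmt_8 {r : ℕ} {n : Fin 4 → ℕ}
    (F : (∀ k : Fin 4, Fin (n k)) → ℂ)
    (σ : Equiv.Perm (Fin 4))
    (M : Matrix (Fin (n (σ 0)) × Fin (n (σ 1))) (Fin (n (σ 2)) × Fin (n (σ 3))) ℂ)
    (hM : ∀ i : ∀ k : Fin 4, Fin (n k), M (i (σ 0), i (σ 1)) (i (σ 2), i (σ 3)) = F i)
    (hrank : M.rank = r) :
    (∃ R : ℕ, R ≤ min (n (σ 0)) (n (σ 1)) * min (n (σ 2)) (n (σ 3)) * r ∧
      ∃ a : (k : Fin 4) → Fin R → Fin (n k) → ℂ,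
        ∀ i : ∀ k : Fin 4, Fin (n k), F i = ∑ p : Fin R, ∏ k, a k p (i k)) ∧
    (n 0 ≤ n 1 → n 1 ≤ n 2 → n 2 ≤ n 3 →
      sInf {s : ℕ | ∃ a : (k : Fin 4) → Fin s → Fin (n k) → ℂ,
          ∀ i : ∀ k : Fin 4, Fin (n k), F i = ∑ p : Fin s, ∏ k, a k p (i k)}
        ≤ n 0 * n 2 * r) := by
  let G : (∀ j, Fin (n (σ j))) → ℂ :=
    fun x => F (Equiv.piCongrLeft (fun k => Fin (n k)) σ x)
  have hG := hasCPDecomposition_of_unfolding G M fun x => by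
    simpa using hM (Equiv.piCongrLeft (fun k => Fin (n k)) σ x)
  have hF : HasCPDecomposition F
      (Fin (min (n (σ 0)) (n (σ 1)) * min (n (σ 2)) (n (σ 3)) * r)) := by
    have hGσ : (fun i => G fun j => i (σ j)) = F :=
      funext fun i => congr_arg F ((Equiv.piCongrLeft (fun k => Fin (n k)) σ).apply_symm_apply i)
    refine hGσ ▸ (hG.reindex_modes (X := fun k => Fin (n k)) σ).of_equiv
      (Fintype.equivOfCardEq ?_)
    simp only [Fintype.card_prod, Fintype.card_fin, hrank]
    ring
  refine ⟨⟨_, le_rfl, hF⟩, fun h01 h12 h23 => (Nat.sInf_le hF).trans ?_⟩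
  have hn : Monotone n := Fin.monotone_iff_le_succ.2 fun i => by fin_cases i <;> assumption
  exact Nat.mul_le_mul_right r (min_mul_min_le_of_monotone hn σ)
end

section
/- Let A¹, …, A^d be complex matrices with A^k of size n_{2k−1} × n_{2k} and rank A^k = r_k, and define the order-2d tensor F(i₁, …, i_{2d}) = Π_{k=1}^{d} A^k(i_{2k−1}, i_{2k}). Then the CP-rank of F equals r₁·r₂·⋯·r_d: F admits a CP decomposition with Π_{k=1}^{d} r_k terms and no CP decomposition of F has fewer terms. Moreover this value equals the M⁺-rank of F. -/
/-! A rank factorization `A^k = U^k V^k` through `K^{ρ k}` multiplies out to a CP decomposition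
of `F` with `∏ ρ k` terms. Conversely, a CP decomposition with `s` terms factors every square
unfolding through `K^s`, so every unfolding has rank at most `s`. The unfolding that pairs the row
and column mode of each `A^k` is the Kronecker product `⨂ A^k`, and its rank is `∏ ρ k` because
`B^k A^k C^k = 1` for suitable `B^k, C^k`; this closes both inequalities. -/

open Finset

namespace Matrix

theorem exists_rank_factorization_s12 {K m n : Type*} [Field K] [Fintype m] [Fintype n]
    (A : Matrix m n K) {r : ℕ} (hr : A.rank = r) :
    ∃ (U : Matrix m (Fin r) K) (V : Matrix (Fin r) n K)
      (B : Matrix (Fin r) m K) (C : Matrix n (Fin r) K),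
      A = U * V ∧ B * A * C = 1 := by
  classical
  let e : LinearMap.range A.mulVecLin ≃ₗ[K] (Fin r → K) :=
    LinearEquiv.ofFinrankEq _ _ (hr.trans (Module.finrank_fin_fun K).symm)
  let u := (LinearMap.range A.mulVecLin).subtype ∘ₗ e.symm.toLinearMap
  let v := e.toLinearMap ∘ₗ A.mulVecLin.rangeRestrict
  obtain ⟨g, hg⟩ := u.exists_leftInverse_of_injective <|
    LinearMap.ker_eq_bot.mpr ((Submodule.injective_subtype _).comp e.symm.injective)
  obtain ⟨h, hh⟩ := v.exists_rightInverse_of_surjective (by simp [v, LinearMap.range_comp])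
  have hA : A = LinearMap.toMatrix' u * LinearMap.toMatrix' v := by
    have huv : u ∘ₗ v = A.mulVecLin := by ext; simp [u, v]
    rw [← LinearMap.toMatrix'_comp, huv, ← toLin'_apply', LinearMap.toMatrix'_toLin']
  refine ⟨_, _, LinearMap.toMatrix' g, LinearMap.toMatrix' h, hA, ?_⟩
  rw [hA, Matrix.mul_assoc, Matrix.mul_assoc, ← Matrix.mul_assoc (LinearMap.toMatrix' g)]
  simp only [← LinearMap.toMatrix'_comp, hg, hh, LinearMap.toMatrix'_id, Matrix.one_mul]

section piKronecker

variable {ι : Type*} [Fintype ι] {α β γ : ι → Type*}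

def piKronecker {R : Type*} [CommSemiring R] (X : ∀ k, Matrix (α k) (β k) R) :
    Matrix (∀ k, α k) (∀ k, β k) R :=
  of fun a b => ∏ k, X k (a k) (b k)

theorem piKronecker_mul {R : Type*} [CommSemiring R] [DecidableEq ι] [∀ k, Fintype (β k)]
    (X : ∀ k, Matrix (α k) (β k) R) (Y : ∀ k, Matrix (β k) (γ k) R) :
    piKronecker X * piKronecker Y = piKronecker fun k => X k * Y k := by
  ext a c
  simp only [piKronecker, mul_apply, of_apply, Fintype.prod_sum, prod_mul_distrib]

theorem piKronecker_one {R : Type*} [CommSemiring R] [∀ k, DecidableEq (α k)] :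
    piKronecker (fun k => (1 : Matrix (α k) (α k) R)) = 1 := by
  ext a b
  simp [piKronecker, one_apply, prod_boole, funext_iff]

theorem rank_piKronecker {K : Type*} [Field K] [DecidableEq ι] [∀ k, Fintype (α k)]
    [∀ k, Fintype (β k)] (X : ∀ k, Matrix (α k) (β k) K) :
    (piKronecker X).rank = ∏ k, (X k).rank := by
  classical
  choose U V B C hUV hBC using fun k => exists_rank_factorization_s12 (X k) rfl
  apply le_antisymm
  · calc (piKronecker X).rank = (piKronecker U * piKronecker V).rank := by
          rw [piKronecker_mul, ← funext hUV]
      _ ≤ Fintype.card (∀ k, Fin (X k).rank) :=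
          (rank_mul_le_left _ _).trans (rank_le_card_width _)
      _ = ∏ k, (X k).rank := by simp
  · calc ∏ k, (X k).rank
          = (1 : Matrix (∀ k, Fin (X k).rank) (∀ k, Fin (X k).rank) K).rank := by
            simp [rank_one]
      _ = (piKronecker B * piKronecker X * piKronecker C).rank := by
          simp only [piKronecker_mul, hBC, piKronecker_one]
      _ ≤ (piKronecker X).rank := (rank_mul_le_left _ _).trans (rank_mul_le_right _ _)

end piKronecker

end Matrix

section CPDecomposition

variable {ι : Type*} [Fintype ι] {γ : ι → Type*} {R : Type*} [CommSemiring R]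

def IsCPDecomposition {s : ℕ} (T : (∀ p, γ p) → R) (a : ∀ p, Fin s → γ p → R) :
    Prop :=
  ∀ I, T I = ∑ i, ∏ p, a p i (I p)

def IsUnfolding {κ κ' : Type*} (T : (∀ p, γ p) → R) (φ : κ ⊕ κ' ≃ ι)
    (M : Matrix (∀ j, γ (φ (.inl j))) (∀ j, γ (φ (.inr j))) R) : Prop :=
  ∀ I, M (fun j => I (φ (.inl j))) (fun j => I (φ (.inr j))) = T I

open Matrix in
theorem IsUnfolding.rank_le_of_isCPDecomposition {K : Type*} [Field K] {κ κ' : Type*}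
    [Fintype κ] [Fintype κ'] [DecidableEq κ'] [∀ p, Fintype (γ p)] {T : (∀ p, γ p) → K}
    {φ : κ ⊕ κ' ≃ ι}
    {M : Matrix (∀ j, γ (φ (.inl j))) (∀ j, γ (φ (.inr j))) K} (hM : IsUnfolding T φ M)
    {s : ℕ} {a : ∀ p, Fin s → γ p → K} (ha : IsCPDecomposition T a) :
    M.rank ≤ s := by
  let X : Matrix (∀ j, γ (φ (.inl j))) (Fin s) K := of fun x i => ∏ j, a (φ (.inl j)) i (x j)
  let Y : Matrix (Fin s) (∀ j, γ (φ (.inr j))) K := of fun i y => ∏ j, a (φ (.inr j)) i (y j)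
  have hXY : M = X * Y := by
    ext x y
    let e := (Equiv.piCongrLeft γ φ).symm.trans (Equiv.sumPiEquivProdPi _)
    obtain ⟨I, rfl, rfl⟩ : ∃ I : ∀ p, γ p,
        (fun j => I (φ (.inl j))) = x ∧ (fun j => I (φ (.inr j))) = y :=
      ⟨e.symm (x, y), Prod.ext_iff.mp (e.apply_symm_apply (x, y))⟩
    rw [hM I, ha I]
    simp [X, Y, mul_apply, ← Equiv.prod_comp φ, Fintype.prod_sum_type]
  calc M.rank = (X * Y).rank := by rw [hXY]
    _ ≤ s := (rank_mul_le_left _ _).trans ((rank_le_card_width _).trans (by simp))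

end CPDecomposition

theorem exists_isCPDecomposition_of_eq_prod_matrix {K : Type*} [Field K] {ι : Type*} [Fintype ι]
    [DecidableEq ι] {m m' r : ι → ℕ} (A : ∀ k, Matrix (Fin (m k)) (Fin (m' k)) K)
    (hr : ∀ k, (A k).rank = r k) (F : (∀ p : ι × Bool, Fin (cond p.2 (m' p.1) (m p.1))) → K)
    (hF : ∀ I, F I = ∏ k, A k (I (k, false)) (I (k, true))) :
    ∃ a : ∀ p : ι × Bool, Fin (∏ k, r k) → Fin (cond p.2 (m' p.1) (m p.1)) → K,
      IsCPDecomposition F a := by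
  choose U V _ _ hUV _ using fun k => Matrix.exists_rank_factorization_s12 (A k) (hr k)
  let e : Fin (∏ k, r k) ≃ ∀ k, Fin (r k) := (Fintype.equivFinOfCardEq (by simp)).symm
  let a : ∀ p : ι × Bool, Fin (∏ k, r k) → Fin (cond p.2 (m' p.1) (m p.1)) → K
    | (k, false), i, x => U k x (e i k)
    | (k, true), i, y => V k (e i k) y
  refine ⟨a, fun I => ?_⟩
  calc F I = ∏ k, ∑ j, U k (I (k, false)) j * V k j (I (k, true)) := by
        simp only [hF, hUV, Matrix.mul_apply]
    _ = ∑ t : ∀ k, Fin (r k), ∏ k, U k (I (k, false)) (t k) * V k (t k) (I (k, true)) :=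
        Fintype.prod_sum _
    _ = ∑ i, ∏ p, a p i (I p) := by
        rw [← e.sum_comp]
        simp [a, Fintype.prod_prod_type, mul_comm]

/-- For the order-`2d` tensor `F(i₁,…,i_{2d}) = ∏_k A^k(i_{2k−1}, i_{2k})` built from matrices
`A^k` with `rank A^k = ρ k`, the CP-rank of `F` equals `∏_k ρ k`: `F` admits a CP
decomposition with `∏_k ρ k` terms and no CP decomposition has fewer terms.  Moreover this
value equals the M⁺-rank of `F`: some square unfolding (obtained from a partition
`φ : Fin d ⊕ Fin d ≃ Fin d × Bool` of the `2d` modes, indexed by `Fin d × Bool` with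
`(k, false)` the row mode and `(k, true)` the column mode of `A^k`) has rank `∏_k ρ k`,
and every square unfolding has rank at most `∏_k ρ k`. -/
theorem stmt_12 {d : ℕ} {m m' : Fin d → ℕ} (ρ : Fin d → ℕ)
    (A : ∀ k : Fin d, Matrix (Fin (m k)) (Fin (m' k)) ℂ)
    (hA : ∀ k, (A k).rank = ρ k)
    (F : (∀ p : Fin d × Bool, Fin (cond p.2 (m' p.1) (m p.1))) → ℂ)
    (hF : ∀ I, F I = ∏ k : Fin d, A k (I (k, false)) (I (k, true))) :
    (∃ a : (p : Fin d × Bool) → Fin (∏ k, ρ k) → Fin (cond p.2 (m' p.1) (m p.1)) → ℂ,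
      ∀ I, F I = ∑ i, ∏ p, a p i (I p)) ∧
    (∀ (s : ℕ) (a : (p : Fin d × Bool) → Fin s → Fin (cond p.2 (m' p.1) (m p.1)) → ℂ),
      (∀ I, F I = ∑ i, ∏ p, a p i (I p)) → (∏ k, ρ k) ≤ s) ∧
    (∃ φ : (Fin d ⊕ Fin d) ≃ (Fin d × Bool),
     ∃ M : Matrix ((j : Fin d) → Fin (cond (φ (Sum.inl j)).2 (m' (φ (Sum.inl j)).1) (m (φ (Sum.inl j)).1)))
                  ((j : Fin d) → Fin (cond (φ (Sum.inr j)).2 (m' (φ (Sum.inr j)).1) (m (φ (Sum.inr j)).1))) ℂ,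
      (∀ I, M (fun j => I (φ (Sum.inl j))) (fun j => I (φ (Sum.inr j))) = F I) ∧
      M.rank = ∏ k, ρ k) ∧
    (∀ φ : (Fin d ⊕ Fin d) ≃ (Fin d × Bool),
     ∀ M : Matrix ((j : Fin d) → Fin (cond (φ (Sum.inl j)).2 (m' (φ (Sum.inl j)).1) (m (φ (Sum.inl j)).1)))
                  ((j : Fin d) → Fin (cond (φ (Sum.inr j)).2 (m' (φ (Sum.inr j)).1) (m (φ (Sum.inr j)).1))) ℂ,
      (∀ I, M (fun j => I (φ (Sum.inl j))) (fun j => I (φ (Sum.inr j))) = F I) →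
      M.rank ≤ ∏ k, ρ k) := by
  have hrank : (Matrix.piKronecker A).rank = ∏ k, ρ k := by simp [Matrix.rank_piKronecker, hA]
  have hunfold : IsUnfolding F ((Equiv.boolProdEquivSum _).symm.trans (Equiv.prodComm _ _))
      (Matrix.piKronecker A) := fun I => (hF I).symm
  obtain ⟨a, ha⟩ := exists_isCPDecomposition_of_eq_prod_matrix A hA F hF
  exact ⟨⟨a, ha⟩, fun s a' ha' => hrank ▸ hunfold.rank_le_of_isCPDecomposition ha',
    ⟨_, _, hunfold, hrank⟩, fun _ _ hM => IsUnfolding.rank_le_of_isCPDecomposition hM ha⟩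
end

section
/- Let F : Fin n × Fin n × Fin n × Fin n → ℂ be a super-symmetric fourth-order tensor and suppose F = Σ_{i=1}^{r} A^i ⊗ A^i, where each A^i is an n × n complex matrix of the form A^i = Σ_{j=1}^{m_i} a^{i,j} (a^{i,j})ᵀ with vectors a^{i,j} ∈ ℂ^n and m_i ≤ n. Then the following entrywise identity holds: F = Σ_{i=1}^{r} Σ_{j=1}^{m_i} a^{i,j} ⊗ a^{i,j} ⊗ a^{i,j} ⊗ a^{i,j} + Σ_{i=1}^{r} Σ_{j≠k} (1/3)·( a^{i,j} ⊗ a^{i,j} ⊗ a^{i,k} ⊗ a^{i,k} + a^{i,j} ⊗ a^{i,k} ⊗ a^{i,j} ⊗ a^{i,k} + a^{i,j} ⊗ a^{i,k} ⊗ a^{i,k} ⊗ a^{i,j} ). -/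
/-!
Symmetry in the last three indices gives `3 F(w,x,y,z) = F(w,x,y,z) + F(w,y,x,z) + F(w,z,y,x)`.
Expanding each `Aⁱ ⊗ Aⁱ` as `∑_{j,k} aⁱʲ ⊗ aⁱʲ ⊗ aⁱᵏ ⊗ aⁱᵏ`, the three diagonal terms `j = k` of
this average coincide with `aⁱʲ ⊗ aⁱʲ ⊗ aⁱʲ ⊗ aⁱʲ`, while the off-diagonal terms are exactly the
three mixed products of the claimed formula.
-/

open Finset

lemma Finset.sum_sum_eq_sum_diag_add_sum_sum_erase {ι M : Type*} [Fintype ι] [DecidableEq ι]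
    [AddCommMonoid M] (f : ι → ι → M) :
    ∑ j, ∑ k, f j k = ∑ j, f j j + ∑ j, ∑ k ∈ univ.erase j, f j k := by
  rw [← sum_add_distrib]
  exact sum_congr rfl fun j _ => (add_sum_erase _ _ (mem_univ j)).symm

lemma Matrix.sum_vecMulVec_self_apply_mul_apply {ι m R : Type*} [Fintype ι] [CommSemiring R]
    (b : ι → m → R) (w x y z : m) :
    (∑ j, vecMulVec (b j) (b j)) w x * (∑ j, vecMulVec (b j) (b j)) y z
      = ∑ j, ∑ k, b j w * b j x * b k y * b k z := by
  simp only [Matrix.sum_apply, vecMulVec_apply, sum_mul_sum, mul_assoc]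

lemma eq_inv_three_mul_of_perm_invariant {α K : Type*} [DivisionRing K] [NeZero (3 : K)]
    {F : α × α × α × α → K}
    (hsym : ∀ σ : Equiv.Perm (Fin 4), ∀ i : Fin 4 → α,
      F (i (σ 0), i (σ 1), i (σ 2), i (σ 3)) = F (i 0, i 1, i 2, i 3))
    (w x y z : α) :
    F (w, x, y, z) = 3⁻¹ * (F (w, x, y, z) + F (w, y, x, z) + F (w, z, y, x)) := by
  have h12 : F (w, y, x, z) = F (w, x, y, z) := by
    simpa [Equiv.swap_apply_def] using hsym (Equiv.swap 1 2) ![w, x, y, z]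
  have h13 : F (w, z, y, x) = F (w, x, y, z) := by
    simpa [Equiv.swap_apply_def] using hsym (Equiv.swap 1 3) ![w, x, y, z]
  rw [h12, h13, show ∀ c : K, c + c + c = 3 * c by intro c; noncomm_ring,
    inv_mul_cancel_left₀ (NeZero.ne 3)]

lemma inv_three_mul_sum_expansions {ι α K : Type*} [Fintype ι] [DecidableEq ι] [Field K]
    [NeZero (3 : K)] (b : ι → α → K) (w x y z : α) :
    3⁻¹ * (∑ j, ∑ k, b j w * b j x * b k y * b k z + ∑ j, ∑ k, b j w * b j y * b k x * b k z
        + ∑ j, ∑ k, b j w * b j z * b k y * b k x)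
      = ∑ j, b j w * b j x * b j y * b j z +
        ∑ j, ∑ k ∈ univ.erase j, (1 / 3 : K) *
          (b j w * b j x * b k y * b k z + b j w * b k x * b j y * b k z
            + b j w * b k x * b k y * b j z) := by
  have h3 : (3 : K) ≠ 0 := NeZero.ne 3
  calc _ = ∑ j, ∑ k, 3⁻¹ * (b j w * b j x * b k y * b k z + b j w * b j y * b k x * b k z
        + b j w * b j z * b k y * b k x) := by
        simp only [mul_add, mul_sum, sum_add_distrib]
    _ = _ := by
      rw [sum_sum_eq_sum_diag_add_sum_sum_erase]
      congr 1
      · exact sum_congr rfl fun j _ => by field_simp; ring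
      · exact sum_congr rfl fun j _ => sum_congr rfl fun k _ => by ring

theorem stmt_13_general {n r : ℕ} {m : Fin r → ℕ}
    (F : Fin n × Fin n × Fin n × Fin n → ℂ)
    (hsym : ∀ σ : Equiv.Perm (Fin 4), ∀ i : Fin 4 → Fin n,
      F (i (σ 0), i (σ 1), i (σ 2), i (σ 3)) = F (i 0, i 1, i 2, i 3))
    (a : (i : Fin r) → Fin (m i) → Fin n → ℂ)
    (A : Fin r → Matrix (Fin n) (Fin n) ℂ)
    (hA : ∀ i, A i = ∑ j : Fin (m i), Matrix.vecMulVec (a i j) (a i j))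
    (hF : ∀ w x y z : Fin n, F (w, x, y, z) = ∑ i, A i w x * A i y z) :
    ∀ w x y z : Fin n,
      F (w, x, y, z) =
        (∑ i, ∑ j, a i j w * a i j x * a i j y * a i j z) +
        ∑ i, ∑ j, ∑ k ∈ Finset.univ.erase j,
          (1 / 3 : ℂ) *
            (a i j w * a i j x * a i k y * a i k z
              + a i j w * a i k x * a i j y * a i k z
              + a i j w * a i k x * a i k y * a i j z) := by
  intro w x y z
  have hexp : ∀ u v s t, F (u, v, s, t) = ∑ i, ∑ j, ∑ k, a i j u * a i j v * a i k s * a i k t :=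
    fun u v s t => by simp only [hF, hA, Matrix.sum_vecMulVec_self_apply_mul_apply]
  rw [eq_inv_three_mul_of_perm_invariant hsym, hexp, hexp, hexp]
  rw [← sum_add_distrib, ← sum_add_distrib, mul_sum, ← sum_add_distrib]
  exact sum_congr rfl fun i _ => inv_three_mul_sum_expansions (a i) w x y z

/-- Lemma: if a super-symmetric fourth-order tensor satisfies `F = ∑ᵢ Aⁱ ⊗ Aⁱ` with
`Aⁱ = ∑ⱼ aⁱʲ (aⁱʲ)ᵀ` and `mᵢ ≤ n`, then entrywise
`F = ∑ᵢ∑ⱼ aⁱʲ⊗aⁱʲ⊗aⁱʲ⊗aⁱʲ + ∑ᵢ∑_{j≠k} (1/3)(aⁱʲ⊗aⁱʲ⊗aⁱᵏ⊗aⁱᵏ + aⁱʲ⊗aⁱᵏ⊗aⁱʲ⊗aⁱᵏ + aⁱʲ⊗aⁱᵏ⊗aⁱᵏ⊗aⁱʲ)`. -/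
theorem stmt_13 {n r : ℕ} {m : Fin r → ℕ} (hm : ∀ i, m i ≤ n)
    (F : Fin n × Fin n × Fin n × Fin n → ℂ)
    (hsym : ∀ σ : Equiv.Perm (Fin 4), ∀ i : Fin 4 → Fin n,
      F (i (σ 0), i (σ 1), i (σ 2), i (σ 3)) = F (i 0, i 1, i 2, i 3))
    (a : (i : Fin r) → Fin (m i) → Fin n → ℂ)
    (A : Fin r → Matrix (Fin n) (Fin n) ℂ)
    (hA : ∀ i, A i = ∑ j : Fin (m i), Matrix.vecMulVec (a i j) (a i j))
    (hF : ∀ w x y z : Fin n, F (w, x, y, z) = ∑ i, A i w x * A i y z) :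
    ∀ w x y z : Fin n,
      F (w, x, y, z) =
        (∑ i, ∑ j, a i j w * a i j x * a i j y * a i j z) +
        ∑ i, ∑ j, ∑ k ∈ Finset.univ.erase j,
          (1 / 3 : ℂ) *
            (a i j w * a i j x * a i k y * a i k z
              + a i j w * a i k x * a i j y * a i k z
              + a i j w * a i k x * a i k y * a i j z) :=
  stmt_13_general F hsym a A hA hF
end

section
/- Let F : Fin n × Fin n × Fin n × Fin n → ℂ be a super-symmetric fourth-order tensor whose square unfolding matr(F) has rank r. Then F admits a symmetric CP decomposition with at most (n + 4n²)·r terms: there exist R ≤ (n + 4n²)·r and vectors b¹, …, b^R ∈ ℂ^n such that F(i,j,k,l) = Σ_{p=1}^{R} b^p(i)·b^p(j)·b^p(k)·b^p(l) for all indices. Combined with the reverse inequality, rank_M(F) ≤ rank_SCP(F) ≤ (n + 4n²)·rank_M(F). -/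
/-!
The square unfolding `M` of a super-symmetric `F` is a symmetric matrix. Over an algebraically
closed field it is therefore a sum of `rank M` terms `g gᵀ`, peeled off one at a time by
Wedderburn's rank-one reduction. Each `g` lies in the column space of `M`, so read as an `n × n`
matrix it is symmetric too, hence a sum of `n` terms `w wᵀ`. This writes `F` as a sum of
`r n²` tensors `a ⊗ a ⊗ b ⊗ b`. By super-symmetry `F` also equals the sum of their
symmetrizations, and each symmetrization is a combination of the fourth tensor powers of
`a + b`, `a - b`, `a` and `b`. Conversely, a symmetric CP decomposition with `s` terms factors
`M` as `A Aᵀ` with `A` of width `s`.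
-/

open Matrix

namespace Matrix

variable {K : Type*} {m n : Type*} [Fintype n]

theorem sub_vecMulVec_mulVec [CommRing K] (M : Matrix m n K) (v : m → K) (w y : n → K) :
    (M - vecMulVec v w) *ᵥ y = M *ᵥ y - (w ⬝ᵥ y) • v := by
  rw [sub_mulVec, vecMulVec_mulVec, op_smul_eq_smul]

theorem range_mulVecLin_sub_vecMulVec_le [CommRing K] {M : Matrix m n K} {v : m → K}
    (hv : v ∈ LinearMap.range M.mulVecLin) (w : n → K) :
    LinearMap.range (M - vecMulVec v w).mulVecLin ≤ LinearMap.range M.mulVecLin := by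
  rintro _ ⟨y, rfl⟩
  rw [mulVecLin_apply, sub_vecMulVec_mulVec]
  exact sub_mem (LinearMap.mem_range_self _ y) (Submodule.smul_mem _ _ hv)

/-- Wedderburn's rank-one reduction: `M *ᵥ u` lies in the range of `M` but not in that of the
reduced matrix, all of whose columns are orthogonal to `w`. -/
theorem rank_sub_vecMulVec_lt [Field K] [Fintype m] {M : Matrix m n K} {u : n → K} {w : m → K}
    (h : w ⬝ᵥ M *ᵥ u = 1) : (M - vecMulVec (M *ᵥ u) (w ᵥ* M)).rank < M.rank := by
  have hu : M *ᵥ u ∈ LinearMap.range M.mulVecLin := LinearMap.mem_range_self _ u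
  refine Submodule.finrank_lt_finrank_of_lt <| SetLike.lt_iff_le_and_exists.2
    ⟨range_mulVecLin_sub_vecMulVec_le hu _, M *ᵥ u, hu, ?_⟩
  rintro ⟨y, hy⟩
  have : w ⬝ᵥ M *ᵥ u = 0 := by
    rw [← hy, mulVecLin_apply, sub_vecMulVec_mulVec, dotProduct_sub, dotProduct_smul, h,
      smul_eq_mul, mul_one, dotProduct_mulVec, sub_self]
  exact one_ne_zero (h.symm.trans this)

variable [Field K] [IsSepClosed K] [NeZero (2 : K)]

theorem IsSymm.exists_dotProduct_mulVec_self_eq_one {M : Matrix n n K} (hM : M.IsSymm)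
    (h0 : M ≠ 0) : ∃ u, u ⬝ᵥ M *ᵥ u = 1 := by
  classical
  have : Invertible (2 : K) := invertibleOfNonzero two_ne_zero
  obtain ⟨x, hx⟩ := LinearMap.BilinForm.exists_bilinForm_self_ne_zero
    (toBilin'.map_ne_zero_iff.2 h0)
    (LinearMap.BilinForm.isSymm_iff.1 (isSymm_toBilin'_iff_isSymm.2 hM))
  rw [toBilin'_apply'] at hx
  obtain ⟨c, hc⟩ := IsSepClosed.exists_eq_mul_self (x ⬝ᵥ M *ᵥ x)⁻¹
  refine ⟨c • x, ?_⟩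
  rw [mulVec_smul, dotProduct_smul, smul_dotProduct, smul_eq_mul, smul_eq_mul, ← mul_assoc,
    ← hc, inv_mul_cancel₀ hx]

theorem IsSymm.exists_rank_sub_vecMulVec_self_lt {M : Matrix n n K} (hM : M.IsSymm)
    (h0 : M ≠ 0) :
    ∃ v ∈ LinearMap.range M.mulVecLin, (M - vecMulVec v v).rank < M.rank := by
  obtain ⟨u, hu⟩ := hM.exists_dotProduct_mulVec_self_eq_one h0
  have hvec : u ᵥ* M = M *ᵥ u := by rw [← vecMul_transpose, hM.eq]
  exact ⟨M *ᵥ u, LinearMap.mem_range_self _ u, by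
    simpa only [hvec] using rank_sub_vecMulVec_lt hu⟩

theorem IsSymm.exists_eq_sum_vecMulVec_self {M : Matrix n n K} (hM : M.IsSymm) {N : ℕ}
    (hN : M.rank ≤ N) :
    ∃ g : Fin N → n → K, (∀ p, g p ∈ LinearMap.range M.mulVecLin) ∧
      M = ∑ p, vecMulVec (g p) (g p) := by
  induction N generalizing M with
  | zero =>
    have h0 : M = 0 := by
      by_contra h0
      obtain ⟨v, -, hlt⟩ := hM.exists_rank_sub_vecMulVec_self_lt h0
      omega
    exact ⟨0, fun _ => zero_mem _, by simp [h0]⟩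
  | succ N ih =>
    by_cases h0 : M = 0
    · exact ⟨0, fun _ => zero_mem _, by simp [h0]⟩
    obtain ⟨v, hv, hlt⟩ := hM.exists_rank_sub_vecMulVec_self_lt h0
    obtain ⟨g, hg, hsum⟩ := ih (hM.sub (transpose_vecMulVec v v)) (by omega)
    refine ⟨Fin.cons v g, Fin.cases hv fun p => range_mulVecLin_sub_vecMulVec_le hv v (hg p), ?_⟩
    rw [Fin.sum_univ_succ, Fin.cons_zero]
    simp only [Fin.cons_succ, ← hsum, add_sub_cancel]

end Matrix

section Tensor

variable {K α ι : Type*}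

def squareUnfolding (F : α × α × α × α → K) : Matrix (α × α) (α × α) K :=
  of fun p q => F (p.1, p.2, q.1, q.2)

def IsSuperSymmetric (F : α × α × α × α → K) : Prop :=
  ∀ σ : Equiv.Perm (Fin 4), ∀ i : Fin 4 → α,
    F (i (σ 0), i (σ 1), i (σ 2), i (σ 3)) = F (i 0, i 1, i 2, i 3)

def IsSymmCPDecomposition [CommSemiring K] [Fintype ι] (F : α × α × α × α → K)
    (b : ι → α → K) : Prop :=
  ∀ i j k l, F (i, j, k, l) = ∑ p, b p i * b p j * b p k * b p l

theorem IsSymmCPDecomposition.exists_fin [CommSemiring K] [Fintype ι] {F : α × α × α × α → K}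
    {b : ι → α → K} (hb : IsSymmCPDecomposition F b) :
    ∃ b' : Fin (Fintype.card ι) → α → K, IsSymmCPDecomposition F b' :=
  ⟨b ∘ (Fintype.equivFin ι).symm, fun i j k l =>
    (hb i j k l).trans ((Fintype.equivFin ι).symm.sum_comp _).symm⟩

theorem IsSymmCPDecomposition.rank_squareUnfolding_le [Field K] [Fintype α] [Fintype ι]
    {F : α × α × α × α → K} {b : ι → α → K} (hb : IsSymmCPDecomposition F b) :
    (squareUnfolding F).rank ≤ Fintype.card ι := by
  let A : Matrix (α × α) ι K := of fun p z => b z p.1 * b z p.2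
  have hA : squareUnfolding F = A * Aᵀ := by
    ext ⟨i, j⟩ ⟨k, l⟩
    simp only [squareUnfolding, of_apply, hb i j k l, mul_apply,
      transpose_apply, A]
    exact Finset.sum_congr rfl fun z _ => by ring
  rw [hA]
  exact (rank_mul_le_left A Aᵀ).trans A.rank_le_card_width

/-- `(a + b)^⊗4 + (a - b)^⊗4 - 2 (a^⊗4 + b^⊗4)` is twice the sum of the six arrangements of
`a ⊗ a ⊗ b ⊗ b`, which motivates the weights `γ ^ 4 = 1 / 12` and `δ ^ 4 = -1 / 6`. -/
def symmetrizingFamily [CommRing K] (γ δ : K) (a b : α → K) : Fin 4 → α → K :=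
  ![γ • (a + b), γ • (a - b), δ • a, δ • b]

theorem sum_symmetrizingFamily [Field K] [CharZero K] {γ δ : K} (hγ : γ ^ 4 = 12⁻¹)
    (hδ : δ ^ 4 = -6⁻¹) (a b : α → K) (i j k l : α) :
    ∑ m, symmetrizingFamily γ δ a b m i * symmetrizingFamily γ δ a b m j *
        symmetrizingFamily γ δ a b m k * symmetrizingFamily γ δ a b m l =
      6⁻¹ * (a i * a j * (b k * b l) + a k * a l * (b i * b j) + a i * a k * (b j * b l) +
        a j * a l * (b i * b k) + a i * a l * (b j * b k) + a j * a k * (b i * b l)) := by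
  simp only [Fin.sum_univ_four, symmetrizingFamily, cons_val, Pi.smul_apply,
    Pi.add_apply, Pi.sub_apply, smul_eq_mul]
  linear_combination
    ((a i + b i) * (a j + b j) * (a k + b k) * (a l + b l) +
      (a i - b i) * (a j - b j) * (a k - b k) * (a l - b l)) * hγ +
    (a i * a j * a k * a l + b i * b j * b k * b l) * hδ

namespace IsSuperSymmetric

variable {F : α × α × α × α → K}

theorem apply_comp (hF : IsSuperSymmetric F) {τ : Fin 4 → Fin 4} (hτ : τ.Bijective)
    (v : Fin 4 → α) : F (v (τ 0), v (τ 1), v (τ 2), v (τ 3)) = F (v 0, v 1, v 2, v 3) :=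
  hF (Equiv.ofBijective τ hτ) v

theorem isSymm_squareUnfolding (hF : IsSuperSymmetric F) : (squareUnfolding F).IsSymm := by
  ext ⟨i, j⟩ ⟨k, l⟩
  simpa [squareUnfolding] using hF.apply_comp (τ := ![2, 3, 0, 1]) (by decide) ![i, j, k, l]

theorem apply_swap_of_mem_range [CommSemiring K] [Fintype α] (hF : IsSuperSymmetric F)
    {v : α × α → K} (hv : v ∈ LinearMap.range (squareUnfolding F).mulVecLin) (i j : α) :
    v (j, i) = v (i, j) := by
  obtain ⟨c, rfl⟩ := hv
  refine Finset.sum_congr rfl fun z _ => congrArg (· * c z) ?_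
  simpa [squareUnfolding] using hF.apply_comp (τ := ![1, 0, 2, 3]) (by decide) ![i, j, z.1, z.2]

theorem exists_eq_sum_mul_mul [Field K] [IsSepClosed K] [NeZero (2 : K)] [Fintype α]
    (hF : IsSuperSymmetric F) {r : ℕ} (hr : (squareUnfolding F).rank ≤ r) :
    ∃ a b : Fin r × Fin (Fintype.card α) × Fin (Fintype.card α) → α → K,
      ∀ i j k l, F (i, j, k, l) = ∑ z, a z i * a z j * (b z k * b z l) := by
  obtain ⟨g, hg, hM⟩ := hF.isSymm_squareUnfolding.exists_eq_sum_vecMulVec_self hr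
  have hG : ∀ p, ∃ w : Fin (Fintype.card α) → α → K,
      of (fun i j => g p (i, j)) = ∑ s, vecMulVec (w s) (w s) := fun p =>
    have hsymm : (of fun i j => g p (i, j)).IsSymm :=
      IsSymm.ext fun i j => hF.apply_swap_of_mem_range (hg p) i j
    (hsymm.exists_eq_sum_vecMulVec_self (rank_le_card_width _)).imp fun _ h => h.2
  choose w hw using hG
  refine ⟨fun z => w z.1 z.2.1, fun z => w z.1 z.2.2, fun i j k l => ?_⟩
  have hgw : ∀ p i j, g p (i, j) = ∑ s, w p s i * w p s j := fun p i j => by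
    simpa [Matrix.sum_apply, vecMulVec_apply] using congrFun (congrFun (hw p) i) j
  calc F (i, j, k, l) = ∑ p, g p (i, j) * g p (k, l) := by
        simpa [squareUnfolding, Matrix.sum_apply, vecMulVec_apply] using
          congrFun (congrFun hM (i, j)) (k, l)
    _ = _ := by
        simp only [hgw, Finset.sum_mul_sum, Fintype.sum_prod_type]

theorem exists_isSymmCPDecomposition_of_eq_sum [Field K] [IsAlgClosed K] [CharZero K]
    [Fintype ι] (hF : IsSuperSymmetric F) (a b : ι → α → K)
    (h : ∀ i j k l, F (i, j, k, l) = ∑ z, a z i * a z j * (b z k * b z l)) :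
    ∃ c : ι × Fin 4 → α → K, IsSymmCPDecomposition F c := by
  obtain ⟨γ, hγ⟩ := IsAlgClosed.exists_pow_nat_eq (12⁻¹ : K) four_pos
  obtain ⟨δ, hδ⟩ := IsAlgClosed.exists_pow_nat_eq (-6⁻¹ : K) four_pos
  refine ⟨fun z => symmetrizingFamily γ δ (a z.1) (b z.1) z.2, fun i j k l => ?_⟩
  have h1 := hF.apply_comp (τ := ![2, 3, 0, 1]) (by decide) ![i, j, k, l]
  have h2 := hF.apply_comp (τ := ![0, 2, 1, 3]) (by decide) ![i, j, k, l]
  have h3 := hF.apply_comp (τ := ![1, 3, 0, 2]) (by decide) ![i, j, k, l]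
  have h4 := hF.apply_comp (τ := ![0, 3, 1, 2]) (by decide) ![i, j, k, l]
  have h5 := hF.apply_comp (τ := ![1, 2, 0, 3]) (by decide) ![i, j, k, l]
  simp only [cons_val] at h1 h2 h3 h4 h5
  rw [Fintype.sum_prod_type]
  simp only [sum_symmetrizingFamily hγ hδ, ← Finset.mul_sum, Finset.sum_add_distrib, ← h]
  rw [h1, h2, h3, h4, h5]
  ring

theorem exists_isSymmCPDecomposition [Field K] [IsAlgClosed K] [CharZero K] [Fintype α]
    (hF : IsSuperSymmetric F) {r : ℕ} (hr : (squareUnfolding F).rank ≤ r) :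
    ∃ R ≤ 4 * Fintype.card α ^ 2 * r, ∃ c : Fin R → α → K, IsSymmCPDecomposition F c := by
  obtain ⟨a, b, h⟩ := hF.exists_eq_sum_mul_mul hr
  obtain ⟨c, hc⟩ := hF.exists_isSymmCPDecomposition_of_eq_sum a b h
  refine ⟨_, le_of_eq ?_, hc.exists_fin⟩
  simp only [Fintype.card_prod, Fintype.card_fin]
  ring

end IsSuperSymmetric

end Tensor

/-- If a super-symmetric fourth-order tensor `F` has square unfolding of rank `r`, then `F`
admits a symmetric CP decomposition with at most `(n + 4n²)·r` terms; combined with the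
reverse inequality, `rank_M(F) ≤ rank_SCP(F) ≤ (n + 4n²)·rank_M(F)`. -/
theorem stmt_16 {n r : ℕ}
    (F : Fin n × Fin n × Fin n × Fin n → ℂ)
    (hsym : ∀ σ : Equiv.Perm (Fin 4), ∀ i : Fin 4 → Fin n,
      F (i (σ 0), i (σ 1), i (σ 2), i (σ 3)) = F (i 0, i 1, i 2, i 3))
    (hrank : (Matrix.of fun p q : Fin n × Fin n => F (p.1, p.2, q.1, q.2)).rank = r) :
    (∃ R : ℕ, R ≤ (n + 4 * n ^ 2) * r ∧
      ∃ b : Fin R → Fin n → ℂ,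
        ∀ i j k l : Fin n, F (i, j, k, l) = ∑ p, b p i * b p j * b p k * b p l) ∧
    r ≤ sInf {s : ℕ | ∃ b : Fin s → Fin n → ℂ,
        ∀ i j k l : Fin n, F (i, j, k, l) = ∑ p, b p i * b p j * b p k * b p l} ∧
    sInf {s : ℕ | ∃ b : Fin s → Fin n → ℂ,
        ∀ i j k l : Fin n, F (i, j, k, l) = ∑ p, b p i * b p j * b p k * b p l}
      ≤ (n + 4 * n ^ 2) * r := by
  have hrank' : (squareUnfolding F).rank = r := hrank
  obtain ⟨R, hR, b, hb⟩ := IsSuperSymmetric.exists_isSymmCPDecomposition hsym hrank'.le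
  have hcard : R ≤ (n + 4 * n ^ 2) * r := by
    rw [Fintype.card_fin] at hR
    nlinarith
  have hmem : R ∈ {s : ℕ | ∃ b : Fin s → Fin n → ℂ, IsSymmCPDecomposition F b} := ⟨b, hb⟩
  have hlower : ∀ s ∈ {s : ℕ | ∃ b : Fin s → Fin n → ℂ, IsSymmCPDecomposition F b}, r ≤ s :=
    fun s ⟨b', hb'⟩ => by simpa [hrank'] using hb'.rank_squareUnfolding_le
  exact ⟨⟨R, hcard, b, hb⟩, le_csInf ⟨R, hmem⟩ hlower, (Nat.sInf_le hmem).trans hcard⟩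
end

section
/- Let F : Fin n₁ × Fin n₂ × Fin n₃ × Fin n₄ → ℝ be a real fourth-order tensor with n₁ ≤ n₂ ≤ n₃ ≤ n₄. If F admits a complex CP decomposition with r terms, then F admits a real CP decomposition with at most n₁·n₃·r terms. In particular, rank_CP(F) ≤ rank_CP^ℝ(F) ≤ n₁·n₃·rank_CP(F), where rank_CP is the CP-rank over ℂ and rank_CP^ℝ is the CP-rank over ℝ. -/
/-!
Fix `i₁, i₃`. The slice `F (i₁, ·, i₃, ·)` is a real matrix that is a sum of `r` complex rank-one
matrices. A real basis of its row space stays linearly independent over `ℂ` and lies in the complex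
span of the `r` vectors `e p`, so the real row space has dimension at most `r`; expanding the rows
in that basis writes the slice as a sum of at most `r` real rank-one matrices. Tensoring these with
the indicator vectors of `i₁` and `i₃` and summing over all slices gives at most `n₁ n₃ r` terms.
-/

open Finset Module Submodule Set

theorem exists_sum_mul_of_algebraMap_eq_sum_mul {K L m n ι : Type*}
    [Field K] [Field L] [Algebra K L] [Finite n] [Fintype ι]
    (G : m → n → K) (x : ι → m → L) (y : ι → n → L)
    (h : ∀ i j, algebraMap K L (G i j) = ∑ p, x p i * y p j) :
    ∃ d ≤ Fintype.card ι, ∃ (u : Fin d → m → K) (v : Fin d → n → K),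
      ∀ i j, G i j = ∑ q, u q i * v q j := by
  set V := span K (range G)
  let b := finBasis K V
  let φ := LinearMap.compLeft (Algebra.linearMap K L) n
  have hrow : ∀ i, φ (G i) ∈ span L (range y) := fun i => by
    have : φ (G i) = ∑ p, x p i • y p := funext fun j => by simpa [φ] using h i j
    rw [this]
    exact sum_mem fun p _ => smul_mem _ _ (subset_span (mem_range_self p))
  have hV : V ≤ ((span L (range y)).restrictScalars K).comap φ :=
    span_le.mpr (range_subset_iff.mpr hrow)
  have hli : LinearIndependent L (fun q => algebraMap K L ∘ (b q : n → K)) :=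
    linearIndependent_algebraMap_comp_iff.mpr (b.linearIndependent.map' V.subtype V.ker_subtype)
  have hspan : span L (range fun q => algebraMap K L ∘ (b q : n → K)) ≤ span L (range y) :=
    span_le.mpr (range_subset_iff.mpr fun q => hV (b q).2)
  refine ⟨finrank K V, ?_, fun q i => b.repr ⟨G i, subset_span (mem_range_self i)⟩ q,
    fun q => b q, ?_⟩
  · calc finrank K V = finrank L (span L (range fun q => algebraMap K L ∘ (b q : n → K))) := by
          simp [finrank_span_eq_card hli]
      _ ≤ finrank L (span L (range y)) := Submodule.finrank_mono hspan
      _ ≤ Fintype.card ι := finrank_range_le_card y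
  · intro i j
    have hGi := congr_arg (fun w : V => (w : n → K) j)
      (b.sum_repr ⟨G i, subset_span (mem_range_self i)⟩)
    simp only [Submodule.coe_sum, Finset.sum_apply, Submodule.coe_smul, Pi.smul_apply,
      smul_eq_mul] at hGi
    exact hGi.symm

def cpDecompSizes (K : Type*) [CommSemiring K] {n₁ n₂ n₃ n₄ : ℕ}
    (F : Fin n₁ × Fin n₂ × Fin n₃ × Fin n₄ → K) : Set ℕ :=
  {s | ∃ (a : Fin s → Fin n₁ → K) (b : Fin s → Fin n₂ → K)
      (c : Fin s → Fin n₃ → K) (e : Fin s → Fin n₄ → K),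
      ∀ i₁ i₂ i₃ i₄, F (i₁, i₂, i₃, i₄) = ∑ p, a p i₁ * b p i₂ * c p i₃ * e p i₄}

section

variable {K : Type*} [CommSemiring K] {n₁ n₂ n₃ n₄ : ℕ}

theorem card_mem_cpDecompSizes {ι : Type*} [Fintype ι]
    {F : Fin n₁ × Fin n₂ × Fin n₃ × Fin n₄ → K} (a : ι → Fin n₁ → K) (b : ι → Fin n₂ → K)
    (c : ι → Fin n₃ → K) (e : ι → Fin n₄ → K)
    (hF : ∀ i₁ i₂ i₃ i₄, F (i₁, i₂, i₃, i₄) = ∑ p, a p i₁ * b p i₂ * c p i₃ * e p i₄) :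
    Fintype.card ι ∈ cpDecompSizes K F := by
  let σ := (Fintype.equivFin ι).symm
  refine ⟨a ∘ σ, b ∘ σ, c ∘ σ, e ∘ σ, fun i₁ i₂ i₃ i₄ => ?_⟩
  rw [hF, ← σ.sum_comp]
  rfl

theorem cpDecompSizes_subset_map {L : Type*} [CommSemiring L] (f : K →+* L)
    (F : Fin n₁ × Fin n₂ × Fin n₃ × Fin n₄ → K) :
    cpDecompSizes K F ⊆ cpDecompSizes L (f ∘ F) := by
  rintro s ⟨a, b, c, e, hF⟩
  exact ⟨fun p => f ∘ a p, fun p => f ∘ b p, fun p => f ∘ c p, fun p => f ∘ e p,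
    fun i₁ i₂ i₃ i₄ => by simp [hF]⟩

end

theorem exists_le_mul_mem_cpDecompSizes_of_algebraMap {K L : Type*}
    [Field K] [Field L] [Algebra K L] {n₁ n₂ n₃ n₄ s : ℕ}
    (F : Fin n₁ × Fin n₂ × Fin n₃ × Fin n₄ → K)
    (hs : s ∈ cpDecompSizes L (algebraMap K L ∘ F)) :
    ∃ R ≤ n₁ * n₃ * s, R ∈ cpDecompSizes K F := by
  obtain ⟨a, b, c, e, hF⟩ := hs
  have hslice (k : Fin n₁ × Fin n₃) : ∃ d ≤ s, ∃ (u : Fin d → Fin n₂ → K)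
      (v : Fin d → Fin n₄ → K), ∀ i₂ i₄, F (k.1, i₂, k.2, i₄) = ∑ q, u q i₂ * v q i₄ := by
    simpa using exists_sum_mul_of_algebraMap_eq_sum_mul (fun i₂ i₄ => F (k.1, i₂, k.2, i₄))
      (fun p i₂ => a p k.1 * c p k.2 * b p i₂) e fun i₂ i₄ => by
        rw [← Function.comp_apply (f := algebraMap K L), hF]
        exact sum_congr rfl fun p _ => by ring
  choose d hd u v huv using hslice
  refine ⟨Fintype.card (Σ k, Fin (d k)), ?_, card_mem_cpDecompSizes
    (fun t => Pi.single t.1.1 1) (fun t => u t.1 t.2) (fun t => Pi.single t.1.2 1)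
    (fun t => v t.1 t.2) fun i₁ i₂ i₃ i₄ => ?_⟩
  · calc Fintype.card (Σ k, Fin (d k)) = ∑ k, d k := by simp
      _ ≤ ∑ _k : Fin n₁ × Fin n₃, s := sum_le_sum fun k _ => hd k
      _ = n₁ * n₃ * s := by simp
  · rw [huv (i₁, i₃)]
    simp [Fintype.sum_sigma, Fintype.sum_prod_type, Pi.single_apply]

theorem stmt_18_general {n₁ n₂ n₃ n₄ r : ℕ}
    (F : Fin n₁ × Fin n₂ × Fin n₃ × Fin n₄ → ℝ)
    (a : Fin r → Fin n₁ → ℂ) (b : Fin r → Fin n₂ → ℂ)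
    (c : Fin r → Fin n₃ → ℂ) (e : Fin r → Fin n₄ → ℂ)
    (hF : ∀ i₁ i₂ i₃ i₄, (F (i₁, i₂, i₃, i₄) : ℂ) =
      ∑ p, a p i₁ * b p i₂ * c p i₃ * e p i₄) :
    (∃ R : ℕ, R ≤ n₁ * n₃ * r ∧
      ∃ (a' : Fin R → Fin n₁ → ℝ) (b' : Fin R → Fin n₂ → ℝ)
        (c' : Fin R → Fin n₃ → ℝ) (e' : Fin R → Fin n₄ → ℝ),
        ∀ i₁ i₂ i₃ i₄, F (i₁, i₂, i₃, i₄) =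
          ∑ p, a' p i₁ * b' p i₂ * c' p i₃ * e' p i₄) ∧
    sInf {s : ℕ | ∃ (a' : Fin s → Fin n₁ → ℂ) (b' : Fin s → Fin n₂ → ℂ)
          (c' : Fin s → Fin n₃ → ℂ) (e' : Fin s → Fin n₄ → ℂ),
        ∀ i₁ i₂ i₃ i₄, (F (i₁, i₂, i₃, i₄) : ℂ) =
          ∑ p, a' p i₁ * b' p i₂ * c' p i₃ * e' p i₄}
      ≤ sInf {s : ℕ | ∃ (a' : Fin s → Fin n₁ → ℝ) (b' : Fin s → Fin n₂ → ℝ)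
          (c' : Fin s → Fin n₃ → ℝ) (e' : Fin s → Fin n₄ → ℝ),
        ∀ i₁ i₂ i₃ i₄, F (i₁, i₂, i₃, i₄) =
          ∑ p, a' p i₁ * b' p i₂ * c' p i₃ * e' p i₄} ∧
    sInf {s : ℕ | ∃ (a' : Fin s → Fin n₁ → ℝ) (b' : Fin s → Fin n₂ → ℝ)
          (c' : Fin s → Fin n₃ → ℝ) (e' : Fin s → Fin n₄ → ℝ),
        ∀ i₁ i₂ i₃ i₄, F (i₁, i₂, i₃, i₄) =
          ∑ p, a' p i₁ * b' p i₂ * c' p i₃ * e' p i₄}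
      ≤ n₁ * n₃ * sInf {s : ℕ | ∃ (a' : Fin s → Fin n₁ → ℂ) (b' : Fin s → Fin n₂ → ℂ)
          (c' : Fin s → Fin n₃ → ℂ) (e' : Fin s → Fin n₄ → ℂ),
        ∀ i₁ i₂ i₃ i₄, (F (i₁, i₂, i₃, i₄) : ℂ) =
          ∑ p, a' p i₁ * b' p i₂ * c' p i₃ * e' p i₄} := by
  change (∃ R ≤ n₁ * n₃ * r, R ∈ cpDecompSizes ℝ F) ∧
    sInf (cpDecompSizes ℂ (algebraMap ℝ ℂ ∘ F)) ≤ sInf (cpDecompSizes ℝ F) ∧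
    sInf (cpDecompSizes ℝ F) ≤ n₁ * n₃ * sInf (cpDecompSizes ℂ (algebraMap ℝ ℂ ∘ F))
  have hr : r ∈ cpDecompSizes ℂ (algebraMap ℝ ℂ ∘ F) := ⟨a, b, c, e, hF⟩
  obtain ⟨R, hRr, hR⟩ := exists_le_mul_mem_cpDecompSizes_of_algebraMap F hr
  obtain ⟨R₀, hR₀, hR₀F⟩ :=
    exists_le_mul_mem_cpDecompSizes_of_algebraMap F (Nat.sInf_mem ⟨r, hr⟩)
  exact ⟨⟨R, hRr, hR⟩,
    csInf_le_csInf (OrderBot.bddBelow _) ⟨R, hR⟩ (cpDecompSizes_subset_map _ F),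
    (Nat.sInf_le hR₀F).trans hR₀⟩

/-- If a real fourth-order tensor `F` with `n₁ ≤ n₂ ≤ n₃ ≤ n₄` admits a complex CP
decomposition with `r` terms, then it admits a real CP decomposition with at most
`n₁·n₃·r` terms.  In particular `rank_CP(F) ≤ rank_CP^ℝ(F) ≤ n₁·n₃·rank_CP(F)`. -/
theorem stmt_18 {n₁ n₂ n₃ n₄ r : ℕ}
    (h12 : n₁ ≤ n₂) (h23 : n₂ ≤ n₃) (h34 : n₃ ≤ n₄)
    (F : Fin n₁ × Fin n₂ × Fin n₃ × Fin n₄ → ℝ)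
    (a : Fin r → Fin n₁ → ℂ) (b : Fin r → Fin n₂ → ℂ)
    (c : Fin r → Fin n₃ → ℂ) (e : Fin r → Fin n₄ → ℂ)
    (hF : ∀ i₁ i₂ i₃ i₄, (F (i₁, i₂, i₃, i₄) : ℂ) =
      ∑ p, a p i₁ * b p i₂ * c p i₃ * e p i₄) :
    (∃ R : ℕ, R ≤ n₁ * n₃ * r ∧
      ∃ (a' : Fin R → Fin n₁ → ℝ) (b' : Fin R → Fin n₂ → ℝ)
        (c' : Fin R → Fin n₃ → ℝ) (e' : Fin R → Fin n₄ → ℝ),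
        ∀ i₁ i₂ i₃ i₄, F (i₁, i₂, i₃, i₄) =
          ∑ p, a' p i₁ * b' p i₂ * c' p i₃ * e' p i₄) ∧
    sInf {s : ℕ | ∃ (a' : Fin s → Fin n₁ → ℂ) (b' : Fin s → Fin n₂ → ℂ)
          (c' : Fin s → Fin n₃ → ℂ) (e' : Fin s → Fin n₄ → ℂ),
        ∀ i₁ i₂ i₃ i₄, (F (i₁, i₂, i₃, i₄) : ℂ) =
          ∑ p, a' p i₁ * b' p i₂ * c' p i₃ * e' p i₄}
      ≤ sInf {s : ℕ | ∃ (a' : Fin s → Fin n₁ → ℝ) (b' : Fin s → Fin n₂ → ℝ)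
          (c' : Fin s → Fin n₃ → ℝ) (e' : Fin s → Fin n₄ → ℝ),
        ∀ i₁ i₂ i₃ i₄, F (i₁, i₂, i₃, i₄) =
          ∑ p, a' p i₁ * b' p i₂ * c' p i₃ * e' p i₄} ∧
    sInf {s : ℕ | ∃ (a' : Fin s → Fin n₁ → ℝ) (b' : Fin s → Fin n₂ → ℝ)
          (c' : Fin s → Fin n₃ → ℝ) (e' : Fin s → Fin n₄ → ℝ),
        ∀ i₁ i₂ i₃ i₄, F (i₁, i₂, i₃, i₄) =
          ∑ p, a' p i₁ * b' p i₂ * c' p i₃ * e' p i₄}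
      ≤ n₁ * n₃ * sInf {s : ℕ | ∃ (a' : Fin s → Fin n₁ → ℂ) (b' : Fin s → Fin n₂ → ℂ)
          (c' : Fin s → Fin n₃ → ℂ) (e' : Fin s → Fin n₄ → ℂ),
        ∀ i₁ i₂ i₃ i₄, (F (i₁, i₂, i₃, i₄) : ℂ) =
          ∑ p, a' p i₁ * b' p i₂ * c' p i₃ * e' p i₄} :=
  stmt_18_general F a b c e hF
end
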